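/- arXiv:2102.00694 — 9 statements merged into one kernel-verified Lean document; each statement's English description precedes it below -/
import Mathlib

section
/- Let n ≥ 2, let (G, ·) be a group, let θ be an automorphism of G and b ∈ G such that θ(b) = b and θ^{n-1}(x) = b·x·b⁻¹ for all x ∈ G. Define f : Gⁿ → G by f(x₁,...,xₙ) = x₁·θ(x₂)·θ²(x₃)·…·θ^{n-1}(xₙ)·b. Then (G, f) is an n-ary group: f is associative, i.e. f(x₁,...,x_{i-1}, f(x_i,...,x_{n+i-1}), x_{n+i},...,x_{2n-1}) = f(x₁,...,x_{j-1}, f(x_j,...,x_{n+j-1}), x_{n+j},...,x_{2n-1}) for all 1 ≤ i < j ≤ n and all x₁,...,x_{2n-1} ∈ G, and for all a₁,...,aₙ, c ∈ G and every 1 ≤ i ≤ n there is a unique x ∈ G with f(a₁,...,a_{i-1}, x, a_{i+1},...,aₙ) = c. -/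
/-- Associativity of an `n`-ary operation: inserting the inner `f` at position `i`
(0-indexed) of the sequence `x₀, …, x_{2n-2}` gives the same result for all positions. -/
def PolyAssoc (n : ℕ) {G : Type*} (f : (Fin n → G) → G) : Prop :=
  ∀ i j : ℕ, i ≤ j → j < n → ∀ x : ℕ → G,
    f (fun t : Fin n =>
        if (t : ℕ) < i then x (t : ℕ)
        else if (t : ℕ) = i then f (fun s : Fin n => x (i + (s : ℕ)))
        else x ((t : ℕ) + n - 1)) =
    f (fun t : Fin n =>
        if (t : ℕ) < j then x (t : ℕ)
        else if (t : ℕ) = j then f (fun s : Fin n => x (j + (s : ℕ)))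
        else x ((t : ℕ) + n - 1))

/-- Unique solvability of one-variable linear equations for an `n`-ary operation. -/
def PolySolv (n : ℕ) {G : Type*} (f : (Fin n → G) → G) : Prop :=
  ∀ (a : Fin n → G) (c : G) (i : Fin n), ∃! x : G, f (Function.update a i x) = c

/-- `(G, f)` is an `n`-ary (polyadic) group. -/
def IsPolyadicGroup (n : ℕ) {G : Type*} (f : (Fin n → G) → G) : Prop :=
  PolyAssoc n f ∧ PolySolv n f

/-- The `n`-ary operation `(θ, b)`-derived from a group:
`f(x₁,…,xₙ) = x₁·θ(x₂)·θ²(x₃)⋯θ^{n-1}(xₙ)·b`. -/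
def derOp {G : Type*} [Group G] (n : ℕ) (θ : MulAut G) (b : G) : (Fin n → G) → G :=
  fun x => (List.ofFn fun i : Fin n => (θ ^ (i : ℕ)) (x i)).prod * b



section Aux
variable {G : Type*} [Group G]

def Qprod (θ : MulAut G) (k m : ℕ) (w : ℕ → G) : G :=
  (List.ofFn fun t : Fin m => (θ ^ (k + (t : ℕ))) (w (t : ℕ))).prod

lemma Qprod_zero (θ : MulAut G) (k : ℕ) (w : ℕ → G) : Qprod θ k 0 w = 1 := rfl

lemma Qprod_succ (θ : MulAut G) (k m : ℕ) (w : ℕ → G) :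
    Qprod θ k (m + 1) w = (θ ^ k) (w 0) * Qprod θ (k + 1) m (fun t => w (t + 1)) := by
  simp only [Qprod, List.ofFn_succ, List.prod_cons, Fin.val_zero, add_zero, Fin.val_succ]
  congr 1
  refine congrArg List.prod (List.ofFn_inj.mpr (funext fun t => ?_))
  rw [show k + ((t : ℕ) + 1) = k + 1 + (t : ℕ) by omega]

lemma Qprod_one (θ : MulAut G) (k : ℕ) (w : ℕ → G) : Qprod θ k 1 w = (θ ^ k) (w 0) := by
  rw [show (1 : ℕ) = 0 + 1 from rfl, Qprod_succ, Qprod_zero, mul_one]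

lemma Qprod_congr (θ : MulAut G) (k m : ℕ) (w w' : ℕ → G) (h : ∀ t < m, w t = w' t) :
    Qprod θ k m w = Qprod θ k m w' := by
  unfold Qprod
  exact congrArg List.prod (List.ofFn_inj.mpr (funext fun t => by rw [h t t.isLt]))

lemma Qprod_add (θ : MulAut G) (k m1 m2 : ℕ) (w : ℕ → G) :
    Qprod θ k (m1 + m2) w = Qprod θ k m1 w * Qprod θ (k + m1) m2 (fun t => w (m1 + t)) := by
  induction m1 generalizing k w with
  | zero => simp [Qprod_zero]
  | succ m ih =>
    rw [show m + 1 + m2 = (m + m2) + 1 by omega, Qprod_succ, ih, Qprod_succ, mul_assoc]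
    congr 2
    rw [show k + 1 + m = k + (m + 1) by omega]
    apply Qprod_congr
    intro t _
    congr 1
    omega

lemma map_Qprod (θ : MulAut G) (j k m : ℕ) (w : ℕ → G) :
    (θ ^ j) (Qprod θ k m w) = Qprod θ (j + k) m w := by
  induction m generalizing k w with
  | zero => simp [Qprod_zero]
  | succ m ih =>
    rw [Qprod_succ, map_mul, ih, Qprod_succ, show j + (k + 1) = j + k + 1 by omega]
    congr 1
    rw [← MulAut.mul_apply, ← pow_add]

lemma pow_fix_b (θ : MulAut G) (b : G) (hθb : θ b = b) (j : ℕ) : (θ ^ j) b = b := by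
  induction j with
  | zero => rfl
  | succ j ih => rw [pow_succ, MulAut.mul_apply, hθb, ih]

lemma conj_Qprod (θ : MulAut G) (b : G) (n : ℕ)
    (hθn : ∀ x : G, (θ ^ (n - 1)) x = b * x * b⁻¹) (k m : ℕ) (w : ℕ → G) :
    b * Qprod θ k m w = Qprod θ ((n - 1) + k) m w * b := by
  induction m generalizing k w with
  | zero => simp [Qprod_zero]
  | succ m ih =>
    rw [Qprod_succ, Qprod_succ, show (n-1) + k + 1 = (n-1) + (k+1) by omega]
    have h1 : (θ ^ ((n-1) + k)) (w 0) = b * (θ ^ k) (w 0) * b⁻¹ := by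
      rw [pow_add, MulAut.mul_apply, hθn]
    calc b * ((θ ^ k) (w 0) * Qprod θ (k + 1) m (fun t => w (t + 1)))
        = (b * (θ ^ k) (w 0) * b⁻¹) * (b * Qprod θ (k + 1) m (fun t => w (t + 1))) := by group
      _ = (b * (θ ^ k) (w 0) * b⁻¹) *
            (Qprod θ ((n-1) + (k+1)) m (fun t => w (t + 1)) * b) := by rw [ih]
      _ = ((θ ^ ((n-1) + k)) (w 0) * Qprod θ ((n-1) + (k+1)) m (fun t => w (t + 1))) * b := by
            rw [h1]; group

lemma derOp_eq (n : ℕ) (θ : MulAut G) (b : G) (v : Fin n → G) (w : ℕ → G)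
    (h : ∀ t : Fin n, w (t : ℕ) = v t) : derOp n θ b v = Qprod θ 0 n w * b := by
  unfold derOp Qprod
  congr 1
  refine congrArg List.prod (List.ofFn_inj.mpr (funext fun t => ?_))
  rw [zero_add, h t]

/-- splitting a `Qprod` at position `i`. -/
lemma Qprod_split (θ : MulAut G) (i m : ℕ) (w : ℕ → G) :
    Qprod θ 0 (i + (1 + m)) w = Qprod θ 0 i w *
      ((θ ^ i) (w (i + 0)) * Qprod θ (i + 1) m (fun t => w (i + (1 + t)))) := by
  rw [Qprod_add, Qprod_add, Qprod_one, zero_add]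

/-- the main computation: inserting the inner operation at any position `i < n`
yields the same value. -/
lemma main_insert (n : ℕ) (hn : 2 ≤ n) (θ : MulAut G) (b : G) (hθb : θ b = b)
    (hθn : ∀ x : G, (θ ^ (n - 1)) x = b * x * b⁻¹) (i : ℕ) (hi : i < n) (x : ℕ → G) :
    derOp n θ b (fun t : Fin n =>
        if (t : ℕ) < i then x (t : ℕ)
        else if (t : ℕ) = i then derOp n θ b (fun s : Fin n => x (i + (s : ℕ)))
        else x ((t : ℕ) + n - 1)) =
    Qprod θ 0 (2 * n - 1) x * b * b := by
  set inner := derOp n θ b (fun s : Fin n => x (i + (s : ℕ))) with hinner_def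
  set w : ℕ → G := fun t => if t < i then x t else if t = i then inner else x (t + n - 1)
    with hw
  rw [derOp_eq n θ b _ w (fun t => rfl)]
  suffices hQ : Qprod θ 0 n w = Qprod θ 0 (2 * n - 1) x * b by rw [hQ]
  have hA : Qprod θ 0 i w = Qprod θ 0 i x := by
    apply Qprod_congr; intro t ht; simp [hw, ht]
  have hT : Qprod θ (i + 1) (n - 1 - i) (fun t => w (i + (1 + t))) =
      Qprod θ (i + 1) (n - 1 - i) (fun t => x (n + i + t)) := by
    apply Qprod_congr; intro t _
    have h1 : ¬ (i + (1 + t) < i) := by omega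
    have h2 : ¬ (i + (1 + t) = i) := by omega
    simp only [hw, if_neg h1, if_neg h2]
    congr 1
    omega
  have hwi : w (i + 0) = inner := by simp [hw]
  have hinner : (θ ^ i) inner = Qprod θ i n (fun s => x (i + s)) * b := by
    rw [hinner_def, derOp_eq n θ b _ (fun s => x (i + s)) (fun t => rfl), map_mul,
      map_Qprod, pow_fix_b θ b hθb, add_zero]
  have hconj : b * Qprod θ (i + 1) (n - 1 - i) (fun t => x (n + i + t)) =
      Qprod θ (n + i) (n - 1 - i) (fun t => x (n + i + t)) * b := by
    have h := conj_Qprod θ b n hθn (i + 1) (n - 1 - i) (fun t => x (n + i + t))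
    rwa [show (n - 1) + (i + 1) = n + i by omega] at h
  have hcomb : Qprod θ 0 i x * Qprod θ i n (fun s => x (i + s)) *
      Qprod θ (n + i) (n - 1 - i) (fun t => x (n + i + t)) = Qprod θ 0 (2 * n - 1) x := by
    have h1 := Qprod_add θ 0 i n x
    have h2 := Qprod_add θ 0 (i + n) (n - 1 - i) x
    rw [zero_add] at h1 h2
    rw [show 2 * n - 1 = (i + n) + (n - 1 - i) by omega, h2, h1,
      show n + i = i + n by omega]
  calc Qprod θ 0 n w
      = Qprod θ 0 (i + (1 + (n - 1 - i))) w := by rw [show i + (1 + (n - 1 - i)) = n by omega]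
    _ = Qprod θ 0 i w *
        ((θ ^ i) (w (i + 0)) * Qprod θ (i + 1) (n - 1 - i) (fun t => w (i + (1 + t)))) :=
        Qprod_split θ i (n - 1 - i) w
    _ = Qprod θ 0 i x * ((Qprod θ i n (fun s => x (i + s)) * b) *
        Qprod θ (i + 1) (n - 1 - i) (fun t => x (n + i + t))) := by
        rw [hA, hT, hwi, hinner]
    _ = Qprod θ 0 i x * (Qprod θ i n (fun s => x (i + s)) *
        (b * Qprod θ (i + 1) (n - 1 - i) (fun t => x (n + i + t)))) := by group
    _ = Qprod θ 0 i x * (Qprod θ i n (fun s => x (i + s)) *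
        (Qprod θ (n + i) (n - 1 - i) (fun t => x (n + i + t)) * b)) := by rw [hconj]
    _ = (Qprod θ 0 i x * Qprod θ i n (fun s => x (i + s)) *
        Qprod θ (n + i) (n - 1 - i) (fun t => x (n + i + t))) * b := by group
    _ = Qprod θ 0 (2 * n - 1) x * b := by rw [hcomb]

lemma solv_key (n : ℕ) (hn : 2 ≤ n) (θ : MulAut G) (b : G)
    (a : Fin n → G) (i : Fin n) :
    ∃ A B : G, ∀ x : G,
      derOp n θ b (Function.update a i x) = A * ((θ ^ (i : ℕ)) x * B) * b := by
  set w : ℕ → G := fun t => if h : t < n then a ⟨t, h⟩ else 1 with hw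
  refine ⟨Qprod θ 0 (i : ℕ) w,
    Qprod θ ((i : ℕ) + 1) (n - 1 - (i : ℕ)) (fun t => w ((i : ℕ) + (1 + t))), fun x => ?_⟩
  set wx : ℕ → G := fun t => if t = (i : ℕ) then x else w t with hwx
  rw [derOp_eq n θ b _ wx ?hwv]
  case hwv =>
    intro t
    by_cases h : (t : ℕ) = (i : ℕ)
    · have ht : t = i := Fin.ext h
      subst ht
      simp [hwx]
    · have ht : t ≠ i := fun hc => h (by rw [hc])
      simp [hwx, h, hw, Function.update_of_ne ht, t.isLt]
  have hsplit := Qprod_split θ (i : ℕ) (n - 1 - (i : ℕ)) wx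
  rw [show (i : ℕ) + (1 + (n - 1 - (i : ℕ))) = n by omega] at hsplit
  have e1 : Qprod θ 0 (i : ℕ) wx = Qprod θ 0 (i : ℕ) w := by
    apply Qprod_congr
    intro t ht
    simp only [hwx]
    rw [if_neg (by omega)]
  have e2 : wx ((i : ℕ) + 0) = x := by simp [hwx]
  have e3 : Qprod θ ((i : ℕ) + 1) (n - 1 - (i : ℕ)) (fun t => wx ((i : ℕ) + (1 + t))) =
      Qprod θ ((i : ℕ) + 1) (n - 1 - (i : ℕ)) (fun t => w ((i : ℕ) + (1 + t))) := by
    apply Qprod_congr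
    intro t _
    simp only [hwx]
    rw [if_neg (by omega)]
  rw [hsplit, e1, e2, e3]

end Aux


/-- the `(θ,b)`-derived `n`-ary operation on a group makes `G` an `n`-ary group. -/
theorem derived_polyadic_is_polyadic_group {G : Type*} [Group G] (n : ℕ) (hn : 2 ≤ n)
    (θ : MulAut G) (b : G) (hθb : θ b = b)
    (hθn : ∀ x : G, (θ ^ (n - 1)) x = b * x * b⁻¹) :
    IsPolyadicGroup n (derOp n θ b) := by
  refine ⟨fun i j hij hjn x => ?_, fun a c i => ?_⟩
  · rw [main_insert n hn θ b hθb hθn i (lt_of_le_of_lt hij hjn) x,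
      main_insert n hn θ b hθb hθn j hjn x]
  · obtain ⟨A, B, key⟩ := solv_key n hn θ b a i
    refine ⟨(θ ^ (i : ℕ)).symm (A⁻¹ * (c * b⁻¹ * B⁻¹)), ?_, ?_⟩
    · simp only [key, MulEquiv.apply_symm_apply]
      group
    · intro y hy
      simp only [key] at hy
      have h2 : (θ ^ (i : ℕ)) y = A⁻¹ * (c * b⁻¹ * B⁻¹) := by rw [← hy]; group
      have h3 := congrArg (θ ^ (i : ℕ)).symm h2
      rwa [MulEquiv.symm_apply_apply] at h3
end

section
/- (Hosszú–Gluskin theorem) Let n ≥ 2 and let (G, f) be an n-ary group. Then there exist a group operation • on G, an automorphism θ of (G, •), and an element b ∈ G such that: (1) θ(b) = b; (2) θ^{n-1}(x) = b • x • b⁻¹ for every x ∈ G; and (3) f(x₁,...,xₙ) = x₁ • θ(x₂) • θ²(x₃) • … • θ^{n-1}(xₙ) • b for all x₁,...,xₙ ∈ G. -/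
set_option maxHeartbeats 1000000

namespace HGaux

variable {G : Type*} {n : ℕ}

/-- `f` applied to the first `n` values of a sequence. -/
def F1 (f : (Fin n → G) → G) (x : ℕ → G) : G := f (fun t : Fin n => x t)

theorem F1_congr (f : (Fin n → G) → G) {x y : ℕ → G} (h : ∀ t, t < n → x t = y t) :
    F1 f x = F1 f y := by
  unfold F1; congr 1; funext t; exact h t t.isLt

/-- canonical value of a (2n-1)-sequence: inner f at position 0. -/
def Cf (f : (Fin n → G) → G) (X : ℕ → G) : G :=
  F1 f (fun t => if t = 0 then F1 f X else X (t + n - 1))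

theorem passoc {f : (Fin n → G) → G} (hA : PolyAssoc n f) {i : ℕ} (hi : i < n) (x : ℕ → G) :
    F1 f (fun t => if t < i then x t
      else if t = i then F1 f (fun s => x (i + s)) else x (t + n - 1)) = Cf f x := by
  have h := (hA 0 i (Nat.zero_le _) hi x).symm
  unfold Cf F1
  convert h using 2
  funext t
  simp only [Nat.not_lt_zero, if_false, Nat.zero_add]

theorem splice {f : (Fin n → G) → G} (hA : PolyAssoc n f) {i : ℕ} (hi : i < n)
    (X : ℕ → G) {Y : ℕ → G}
    (hY : ∀ t, t < n → Y t = if t < i then X t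
      else if t = i then F1 f (fun s => X (i + s)) else X (t + n - 1)) :
    F1 f Y = Cf f X :=
  (F1_congr f hY).trans (passoc hA hi X)

theorem C_eq_mid {f : (Fin n → G) → G} {X W : ℕ → G} (hv : F1 f X = W 0)
    (htail : ∀ t, 1 ≤ t → t < n → W t = X (t + n - 1)) : Cf f X = F1 f W := by
  unfold Cf
  refine F1_congr f fun t ht => ?_
  rcases Nat.eq_zero_or_pos t with h | h
  · simp [h, hv]
  · rw [if_neg (by omega), htail t h ht]

theorem solv_bij {f : (Fin n → G) → G} (hs : PolySolv n f) (base : Fin n → G) (i : Fin n) :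
    Function.Bijective (fun z : G => f (Function.update base i z)) := by
  constructor
  · intro u v huv
    obtain ⟨w, -, hw⟩ := hs base (f (Function.update base i v)) i
    rw [hw u huv, hw v rfl]
  · intro c
    obtain ⟨z, hz, -⟩ := hs base c i
    exact ⟨z, hz⟩

end HGaux

namespace HGaux

variable {G : Type*} {n : ℕ}

/-- retract multiplication `x * y = f(x, ā, a^{n-3}, y)`. -/
def mulop (f : (Fin n → G) → G) (a abar x y : G) : G :=
  F1 f fun t => if t = 0 then x else if t = n - 1 then y else if t = 1 then abar else a

/-- `τ_k(x) = f(a^k, x, ā, a^{n-2-k})`, for `k ≤ n-2`. -/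
def tauop (f : (Fin n → G) → G) (a abar : G) (k : ℕ) (x : G) : G :=
  F1 f fun t => if t < k then a else if t = k then x else if t = k + 1 then abar else a

def bop (f : (Fin n → G) → G) (a : G) : G := F1 f fun _ => a

section

variable {f : (Fin n → G) → G} {a abar : G}

theorem L_inj (hs : PolySolv n f) (hn : 2 ≤ n) {u v : G}
    (h : F1 f (fun t => if t = n - 1 then u else a) = F1 f (fun t => if t = n - 1 then v else a)) :
    u = v := by
  have key : ∀ z : G, F1 f (fun t : ℕ => if t = n - 1 then z else a)
      = f (Function.update (fun _ => a) ⟨n - 1, by omega⟩ z) := by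
    intro z; unfold F1; congr 1; funext t
    simp only [Function.update_apply, Fin.ext_iff]
  rw [key, key] at h
  exact (solv_bij hs _ _).1 h

theorem R_inj (hs : PolySolv n f) (hn : 2 ≤ n) {u v : G}
    (h : F1 f (fun t => if t = 0 then u else a) = F1 f (fun t => if t = 0 then v else a)) :
    u = v := by
  have key : ∀ z : G, F1 f (fun t : ℕ => if t = 0 then z else a)
      = f (Function.update (fun _ => a) ⟨0, by omega⟩ z) := by
    intro z; unfold F1; congr 1; funext t
    simp only [Function.update_apply, Fin.ext_iff]
  rw [key, key] at h
  exact (solv_bij hs _ _).1 h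

variable (hA : PolyAssoc n f) (hs : PolySolv n f) (hn : 2 ≤ n)
  (habar : F1 f (fun t => if t = n - 1 then abar else a) = a)

include hA hs hn habar

set_option linter.unusedSectionVars false

theorem dleft {i : ℕ} (hi : i ≤ n - 2) (y : G) :
    F1 f (fun t => if t = i then abar else if t = n - 1 then y else a) = y := by
  set D : ℕ → G := fun t => if t = i then abar else if t = n - 1 then y else a with hD
  set X : ℕ → G := fun t => if t = n - 1 + i then abar else if t = 2 * n - 2 then y else a with hX
  apply L_inj hs hn (a := a) (u := F1 f D) (v := y)
  have h1 : F1 f (fun t => if t = n - 1 then F1 f D else a) = Cf f X := by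
    apply splice hA (i := n - 1) (by omega)
    intro t ht
    have hin : F1 f (fun s => X (n - 1 + s)) = F1 f D := by
      refine F1_congr f fun s hs' => ?_
      simp only [hX, hD]
      split_ifs <;> first | rfl | omega
    rw [hin]
    simp only [hX]
    split_ifs <;> first | rfl | omega
  have h2 : F1 f (fun t => if t = n - 1 then y else a) = Cf f X := by
    apply splice hA (i := i) (by omega)
    intro t ht
    have hin : F1 f (fun s => X (i + s)) = a := by
      refine Eq.trans (F1_congr f (y := fun t => if t = n - 1 then abar else a)
        fun s hs' => ?_) habar
      simp only [hX]
      split_ifs <;> first | rfl | omega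
    rw [hin]
    simp only [hX]
    split_ifs <;> first | rfl | omega
  rw [h1, h2]

theorem dA {i : ℕ} (hi : i ≤ n - 1) :
    F1 f (fun t => if t = i then abar else a) = a := by
  rcases Nat.lt_or_ge i (n - 1) with h | h
  · refine Eq.trans (F1_congr f
      (y := fun t => if t = i then abar else if t = n - 1 then a else a) fun t ht => ?_)
      (dleft hA hs hn habar (i := i) (by omega) a)
    beta_reduce
    split_ifs <;> first | rfl | omega
  · have hi' : i = n - 1 := by omega
    subst hi'
    exact habar

theorem dright {j : ℕ} (hj1 : 1 ≤ j) (hj2 : j ≤ n - 1) (y : G) :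
    F1 f (fun t => if t = 0 then y else if t = j then abar else a) = y := by
  set X : ℕ → G := fun t => if t = 0 then y else if t = j then abar else a with hX
  apply R_inj hs hn (a := a) (u := F1 f X) (v := y)
  have h1 : F1 f (fun t => if t = 0 then F1 f X else a) = Cf f X := by
    apply splice hA (i := 0) (by omega)
    intro t ht
    have hin : F1 f (fun s => X (0 + s)) = F1 f X := by
      refine F1_congr f fun s hs' => ?_
      congr 1; omega
    rw [hin]
    simp only [hX]
    split_ifs <;> first | rfl | omega
  have h2 : F1 f (fun t => if t = 0 then y else a) = Cf f X := by
    apply splice hA (i := j) (by omega)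
    intro t ht
    have hin : F1 f (fun s => X (j + s)) = a := by
      refine Eq.trans (F1_congr f (y := fun t => if t = 0 then abar else a)
        fun s hs' => ?_) (dA hA hs hn habar (i := 0) (by omega))
      simp only [hX]
      split_ifs <;> first | rfl | omega
    rw [hin]
    simp only [hX]
    split_ifs <;> first | rfl | omega
  rw [h1, h2]


omit hA hs hn habar in
theorem mul_assocP (x y z : G) (hA : PolyAssoc n f) (hn : 2 ≤ n) :
    mulop f a abar (mulop f a abar x y) z = mulop f a abar x (mulop f a abar y z) := by
  set X : ℕ → G := fun t => if t = 0 then x else if t = n - 1 then y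
    else if t = 2 * n - 2 then z else if t = 1 then abar else if t = n then abar else a with hX
  have h1 : mulop f a abar (mulop f a abar x y) z = Cf f X := by
    apply splice hA (i := 0) (by omega)
    intro t ht
    have hin : F1 f (fun s => X (0 + s)) = mulop f a abar x y := by
      refine F1_congr f fun s hs' => ?_
      beta_reduce
      simp only [hX]
      split_ifs <;> first | rfl | omega
    rw [hin]
    beta_reduce
    simp only [hX]
    split_ifs <;> first | rfl | omega
  have h2 : mulop f a abar x (mulop f a abar y z) = Cf f X := by
    apply splice hA (i := n - 1) (by omega)
    intro t ht
    have hin : F1 f (fun s => X (n - 1 + s)) = mulop f a abar y z := by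
      refine F1_congr f fun s hs' => ?_
      beta_reduce
      simp only [hX]
      split_ifs <;> first | rfl | omega
    rw [hin]
    beta_reduce
    simp only [hX]
    split_ifs <;> first | rfl | omega
  rw [h1, h2]

theorem mul_a_left (hn3 : 3 ≤ n) (y : G) : mulop f a abar a y = y := by
  refine Eq.trans (F1_congr f
    (y := fun t => if t = 1 then abar else if t = n - 1 then y else a) fun t ht => ?_)
    (dleft hA hs hn habar (i := 1) (by omega) y)
  beta_reduce
  split_ifs <;> first | rfl | omega

theorem mul_a_right (hn3 : 3 ≤ n) (y : G) : mulop f a abar y a = y := by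
  refine Eq.trans (F1_congr f
    (y := fun t => if t = 0 then y else if t = 1 then abar else a) fun t ht => ?_)
    (dright hA hs hn habar (j := 1) (by omega) (by omega) y)
  beta_reduce
  split_ifs <;> first | rfl | omega

omit hA hs hn habar in
theorem mul_right_bij (hs : PolySolv n f) (hn : 2 ≤ n) (x : G) :
    Function.Bijective (fun z => mulop f a abar x z) := by
  have key : (fun z => mulop f a abar x z) = fun z => f (Function.update
      (fun t : Fin n => if (t : ℕ) = 0 then x else if (t : ℕ) = 1 then abar else a)
      ⟨n - 1, by omega⟩ z) := by
    funext z
    simp only [mulop, F1]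
    congr 1
    funext t
    have htlt := t.isLt
    simp only [Function.update_apply, Fin.ext_iff]
    try split_ifs <;> first | rfl | omega
  rw [key]
  exact solv_bij hs _ _

omit hA hs hn habar in
theorem mul_left_bij (hs : PolySolv n f) (hn : 2 ≤ n) (x : G) :
    Function.Bijective (fun z => mulop f a abar z x) := by
  have key : (fun z => mulop f a abar z x) = fun z => f (Function.update
      (fun t : Fin n => if (t : ℕ) = n - 1 then x else if (t : ℕ) = 1 then abar else a)
      ⟨0, by omega⟩ z) := by
    funext z
    simp only [mulop, F1]
    congr 1
    funext t
    have htlt := t.isLt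
    simp only [Function.update_apply, Fin.ext_iff]
    try split_ifs <;> first | rfl | omega
  rw [key]
  exact solv_bij hs _ _

theorem tau_zero (x : G) : tauop f a abar 0 x = x := by
  refine Eq.trans (F1_congr f
    (y := fun t => if t = 0 then x else if t = 1 then abar else a) fun t ht => ?_)
    (dright hA hs hn habar (j := 1) (by omega) (by omega) x)
  beta_reduce
  split_ifs <;> first | rfl | omega


theorem theta_tau (hn3 : 3 ≤ n) {k : ℕ} (hk : k ≤ n - 3) (x : G) :
    tauop f a abar 1 (tauop f a abar k x) = tauop f a abar (k + 1) x := by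
  set Z : ℕ → G := fun t => if t = k + 1 then x else if t = k + 2 then abar
    else if t = n + 1 then abar else a with hZ
  have h1 : tauop f a abar 1 (tauop f a abar k x) = Cf f Z := by
    apply splice hA (i := 1) (by omega)
    intro t ht
    have hin : F1 f (fun s => Z (1 + s)) = tauop f a abar k x := by
      refine F1_congr f fun s hs' => ?_
      beta_reduce; simp only [hZ]
      split_ifs <;> first | rfl | omega
    rw [hin]
    beta_reduce; simp only [hZ]
    split_ifs <;> first | rfl | omega
  have h2 : tauop f a abar (k + 1) x = Cf f Z := by
    apply splice hA (i := n - 1) (by omega)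
    intro t ht
    rcases Nat.lt_or_ge k (n - 3) with hk2 | hk2
    · have hin : F1 f (fun s => Z (n - 1 + s)) = a := by
        refine Eq.trans (F1_congr f (y := fun s => if s = 2 then abar else a)
          fun s hs' => ?_) (dA hA hs hn habar (i := 2) (by omega))
        beta_reduce; simp only [hZ]
        split_ifs <;> first | rfl | omega
      rw [hin]
      beta_reduce; simp only [hZ]
      split_ifs <;> first | rfl | omega
    · have hkk : k = n - 3 := by omega
      have hin : F1 f (fun s => Z (n - 1 + s)) = abar := by
        refine Eq.trans (F1_congr f
          (y := fun s => if s = 0 then abar else if s = 2 then abar else a)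
          fun s hs' => ?_) (dright hA hs hn habar (j := 2) (by omega) (by omega) abar)
        beta_reduce; simp only [hZ]
        split_ifs <;> first | rfl | omega
      rw [hin]
      beta_reduce; simp only [hZ]
      split_ifs <;> first | rfl | omega
  rw [h1, h2]

theorem An_eq (hn3 : 3 ≤ n) (x : G) :
    F1 f (fun t => if t = n - 1 then x else a)
      = mulop f a abar (tauop f a abar 1 (tauop f a abar (n - 2) x)) (bop f a) := by
  set w : G := tauop f a abar (n - 2) x with hw
  set v : G := tauop f a abar 1 w with hv
  set S : ℕ → G := fun t => if t = 0 then v else if t = 1 then abar else a with hS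
  set T : ℕ → G := fun t => if t = 1 then w else if t = 2 then abar else a with hT
  set U : ℕ → G := fun t => if t = n - 1 then x else if t = n then abar else a with hU
  set mid1 : ℕ → G := fun t => if t = 0 then v else a with hmid1
  set mid2 : ℕ → G := fun t => if t = 1 then w else a with hmid2
  have hc1 : mulop f a abar v (bop f a) = Cf f S := by
    apply splice hA (i := n - 1) (by omega)
    intro t ht
    have hin : F1 f (fun s => S (n - 1 + s)) = bop f a := by
      refine F1_congr f fun s hs' => ?_
      beta_reduce; simp only [hS]
      split_ifs <;> first | rfl | omega
    rw [hin]
    beta_reduce; simp only [hS]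
    split_ifs <;> first | rfl | omega
  have hc2 : Cf f S = F1 f mid1 := by
    refine C_eq_mid ?_ ?_
    · refine Eq.trans (F1_congr f
        (y := fun t => if t = 0 then v else if t = 1 then abar else a) fun t ht => ?_)
        ((dright hA hs hn habar (j := 1) (by omega) (by omega) v).trans ?_)
      · beta_reduce; simp only [hS]
        try split_ifs <;> first | rfl | omega
      · simp [hmid1]
    · intro t h1t htn
      beta_reduce; simp only [hS, hmid1]
      split_ifs <;> first | rfl | omega
  have hc3 : Cf f T = F1 f mid1 := by
    refine C_eq_mid ?_ ?_
    · refine Eq.trans (F1_congr f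
        (y := fun t => if t < 1 then a else if t = 1 then w else if t = 1 + 1 then abar else a)
        fun t ht => ?_) ?_
      · beta_reduce; simp only [hT]
        split_ifs <;> first | rfl | omega
      · show tauop f a abar 1 w = mid1 0
        simp [hmid1, hv]
    · intro t h1t htn
      beta_reduce; simp only [hT, hmid1]
      split_ifs <;> first | rfl | omega
  have hc4 : F1 f mid2 = Cf f T := by
    apply splice hA (i := 2) (by omega)
    intro t ht
    have hin : F1 f (fun s => T (2 + s)) = a := by
      refine Eq.trans (F1_congr f (y := fun s => if s = 0 then abar else a)
        fun s hs' => ?_) (dA hA hs hn habar (i := 0) (by omega))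
      beta_reduce; simp only [hT]
      split_ifs <;> first | rfl | omega
    rw [hin]
    beta_reduce; simp only [hT, hmid2]
    split_ifs <;> first | rfl | omega
  have hc5 : F1 f mid2 = Cf f U := by
    apply splice hA (i := 1) (by omega)
    intro t ht
    have hin : F1 f (fun s => U (1 + s)) = w := by
      refine Eq.trans (F1_congr f
        (y := fun t => if t < n - 2 then a else if t = n - 2 then x
          else if t = n - 2 + 1 then abar else a) fun s hs' => ?_) ?_
      · beta_reduce; simp only [hU]
        split_ifs <;> first | rfl | omega
      · show tauop f a abar (n - 2) x = w
        simp only [hw]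
    rw [hin]
    beta_reduce; simp only [hU, hmid2]
    split_ifs <;> first | rfl | omega
  have hc6 : F1 f (fun t => if t = n - 1 then x else a) = Cf f U := by
    apply splice hA (i := n - 1) (by omega)
    intro t ht
    have hin : F1 f (fun s => U (n - 1 + s)) = x := by
      refine Eq.trans (F1_congr f
        (y := fun s => if s = 0 then x else if s = 1 then abar else a) fun s hs' => ?_)
        (dright hA hs hn habar (j := 1) (by omega) (by omega) x)
      beta_reduce; simp only [hU]
      split_ifs <;> first | rfl | omega
    rw [hin]
    beta_reduce; simp only [hU]
    split_ifs <;> first | rfl | omega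
  calc F1 f (fun t => if t = n - 1 then x else a) = Cf f U := hc6
    _ = F1 f mid2 := hc5.symm
    _ = Cf f T := hc4
    _ = F1 f mid1 := hc3
    _ = Cf f S := hc2.symm
    _ = mulop f a abar v (bop f a) := hc1.symm

theorem An_eq_b_mul (hn3 : 3 ≤ n) (x : G) :
    F1 f (fun t => if t = n - 1 then x else a) = mulop f a abar (bop f a) x := by
  set W : ℕ → G := fun t => if t = n then abar else if t = 2 * n - 2 then x else a with hW
  have h1 : mulop f a abar (bop f a) x = Cf f W := by
    apply splice hA (i := 0) (by omega)
    intro t ht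
    have hin : F1 f (fun s => W (0 + s)) = bop f a := by
      refine F1_congr f fun s hs' => ?_
      beta_reduce; simp only [hW]
      split_ifs <;> first | rfl | omega
    rw [hin]
    beta_reduce; simp only [hW]
    split_ifs <;> first | rfl | omega
  have h2 : F1 f (fun t => if t = n - 1 then x else a) = Cf f W := by
    apply splice hA (i := 1) (by omega)
    intro t ht
    have hin : F1 f (fun s => W (1 + s)) = a := by
      refine Eq.trans (F1_congr f (y := fun s => if s = n - 1 then abar else a)
        fun s hs' => ?_) habar
      beta_reduce; simp only [hW]
      split_ifs <;> first | rfl | omega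
    rw [hin]
    beta_reduce; simp only [hW]
    split_ifs <;> first | rfl | omega
  rw [h1, h2]

theorem theta_bop (hn3 : 3 ≤ n) : tauop f a abar 1 (bop f a) = bop f a := by
  set V : ℕ → G := fun t => if t = n + 1 then abar else a with hV
  have h1 : tauop f a abar 1 (bop f a) = Cf f V := by
    apply splice hA (i := 1) (by omega)
    intro t ht
    have hin : F1 f (fun s => V (1 + s)) = bop f a := by
      refine F1_congr f fun s hs' => ?_
      beta_reduce; simp only [hV]
      split_ifs <;> first | rfl | omega
    rw [hin]
    beta_reduce; simp only [hV]
    split_ifs <;> first | rfl | omega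
  have h2 : Cf f V = bop f a := by
    refine Eq.trans (C_eq_mid (W := fun t => if t = 0 then bop f a
      else if t = 2 then abar else a) ?_ ?_)
      (dright hA hs hn habar (j := 2) (by omega) (by omega) (bop f a))
    · refine Eq.trans (F1_congr f (y := fun _ => a) fun t ht => ?_) rfl
      beta_reduce; simp only [hV]
      split_ifs <;> first | rfl | omega
    · intro t h1t htn
      beta_reduce; simp only [hV]
      split_ifs <;> first | rfl | omega
  rw [h1, h2]

theorem theta_hom (hn3 : 3 ≤ n) (x y : G) :
    tauop f a abar 1 (mulop f a abar x y)
      = mulop f a abar (tauop f a abar 1 x) (tauop f a abar 1 y) := by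
  set P : ℕ → G := fun t => if t = 1 then x else if t = 2 then abar
    else if t = n then y else if t = n + 1 then abar else a with hP
  set Q : ℕ → G := fun t => if t = 0 then tauop f a abar 1 x else if t = 1 then abar
    else if t = n then y else if t = n + 1 then abar else a with hQ
  set midP : ℕ → G := fun t => if t = 0 then tauop f a abar 1 x
    else if t = 1 then y else if t = 2 then abar else a with hmidP
  have h1 : tauop f a abar 1 (mulop f a abar x y) = Cf f P := by
    apply splice hA (i := 1) (by omega)
    intro t ht
    have hin : F1 f (fun s => P (1 + s)) = mulop f a abar x y := by
      refine F1_congr f fun s hs' => ?_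
      beta_reduce; simp only [hP]
      split_ifs <;> first | rfl | omega
    rw [hin]
    beta_reduce; simp only [hP]
    split_ifs <;> first | rfl | omega
  have h2 : Cf f P = F1 f midP := by
    refine C_eq_mid ?_ ?_
    · refine Eq.trans (F1_congr f
        (y := fun t => if t < 1 then a else if t = 1 then x else if t = 1 + 1 then abar else a)
        fun t ht => ?_) ?_
      · beta_reduce; simp only [hP]
        split_ifs <;> first | rfl | omega
      · show tauop f a abar 1 x = midP 0
        simp [hmidP]
    · intro t h1t htn
      beta_reduce; simp only [hP, hmidP]
      split_ifs <;> first | rfl | omega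
  have h3 : Cf f Q = F1 f midP := by
    refine C_eq_mid ?_ ?_
    · refine Eq.trans (F1_congr f
        (y := fun t => if t = 0 then tauop f a abar 1 x else if t = 1 then abar else a)
        fun t ht => ?_)
        ((dright hA hs hn habar (j := 1) (by omega) (by omega) (tauop f a abar 1 x)).trans ?_)
      · beta_reduce; simp only [hQ]
        split_ifs <;> first | rfl | omega
      · simp [hmidP]
    · intro t h1t htn
      beta_reduce; simp only [hQ, hmidP]
      split_ifs <;> first | rfl | omega
  have h4 : mulop f a abar (tauop f a abar 1 x) (tauop f a abar 1 y) = Cf f Q := by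
    apply splice hA (i := n - 1) (by omega)
    intro t ht
    have hin : F1 f (fun s => Q (n - 1 + s)) = tauop f a abar 1 y := by
      refine Eq.trans (F1_congr f
        (y := fun t => if t < 1 then a else if t = 1 then y else if t = 1 + 1 then abar else a)
        fun s hs' => ?_) rfl
      beta_reduce; simp only [hQ]
      split_ifs <;> first | rfl | omega
    rw [hin]
    beta_reduce; simp only [hQ]
    split_ifs <;> first | rfl | omega
  calc tauop f a abar 1 (mulop f a abar x y) = Cf f P := h1
    _ = F1 f midP := h2
    _ = Cf f Q := h3.symm
    _ = mulop f a abar (tauop f a abar 1 x) (tauop f a abar 1 y) := h4.symm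


theorem peel (hn3 : 3 ≤ n) {k : ℕ} (hk : k ≤ n - 2) (X : ℕ → G) :
    F1 f (fun t => if t < k then a else X t)
      = mulop f a abar (tauop f a abar k (X k))
          (F1 f (fun t => if t < k + 1 then a else X t)) := by
  set u : G := tauop f a abar k (X k) with hu
  set Y1 : ℕ → G := fun t => if t < k then a else if t = k then X k
    else if t = k + 1 then abar else if t < k + n then a else X (t - n + 1) with hY1
  set Y2 : ℕ → G := fun t => if t = 0 then u else if t = 1 then abar
    else if t < n + k then a else X (t - n + 1) with hY2
  set mid : ℕ → G := fun t => if t = 0 then u else if t ≤ k then a else X t with hmid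
  have h1 : F1 f (fun t => if t < k then a else X t) = Cf f Y1 := by
    apply splice hA (i := k + 1) (by omega)
    intro t ht
    have hin : F1 f (fun s => Y1 (k + 1 + s)) = X (k + 1) := by
      refine Eq.trans (F1_congr f (y := fun s => if s = 0 then abar
        else if s = n - 1 then X (k + 1) else a) fun s hs' => ?_)
        (dleft hA hs hn habar (i := 0) (by omega) (X (k + 1)))
      beta_reduce; simp only [hY1]
      split_ifs <;> first | rfl | omega | (congr 1 <;> omega)
    rw [hin]
    beta_reduce; simp only [hY1]
    split_ifs <;> first | rfl | omega | (congr 1 <;> omega)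
  have h2 : Cf f Y1 = F1 f mid := by
    refine C_eq_mid ?_ ?_
    · refine Eq.trans (F1_congr f (y := fun t => if t < k then a else if t = k then X k
        else if t = k + 1 then abar else a) fun t ht => ?_) ?_
      · beta_reduce; simp only [hY1]
        split_ifs <;> first | rfl | omega
      · show tauop f a abar k (X k) = mid 0
        simp [hmid, hu]
    · intro t h1t htn
      beta_reduce; simp only [hY1, hmid]
      split_ifs <;> first | rfl | omega | (congr 1 <;> omega)
  have h3 : F1 f mid = Cf f Y2 := by
    apply splice hA (i := 0) (by omega)
    intro t ht
    have hin : F1 f (fun s => Y2 (0 + s)) = u := by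
      refine Eq.trans (F1_congr f (y := fun s => if s = 0 then u else if s = 1 then abar else a)
        fun s hs' => ?_) (dright hA hs hn habar (j := 1) (by omega) (by omega) u)
      beta_reduce; simp only [hY2]
      split_ifs <;> first | rfl | omega
    rw [hin]
    beta_reduce; simp only [hY2, hmid]
    split_ifs <;> first | rfl | omega | (congr 1 <;> omega)
  have h4 : mulop f a abar u (F1 f (fun t => if t < k + 1 then a else X t)) = Cf f Y2 := by
    apply splice hA (i := n - 1) (by omega)
    intro t ht
    have hin : F1 f (fun s => Y2 (n - 1 + s)) = F1 f (fun t => if t < k + 1 then a else X t) := by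
      refine F1_congr f fun s hs' => ?_
      beta_reduce; simp only [hY2]
      split_ifs <;> first | rfl | omega | (congr 1 <;> omega)
    rw [hin]
    beta_reduce; simp only [hY2]
    split_ifs <;> first | rfl | omega
  rw [h1, h2, h3, h4]

theorem tau_iter (hn3 : 3 ≤ n) {k : ℕ} (hk : k ≤ n - 2) (x : G) :
    tauop f a abar k x = (tauop f a abar 1)^[k] x := by
  induction k with
  | zero => simpa using tau_zero hA hs hn habar x
  | succ k ih =>
    rw [← theta_tau hA hs hn habar hn3 (k := k) (by omega) x,
      Function.iterate_succ_apply', ← ih (by omega)]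

theorem chain (hn3 : 3 ≤ n) (X : ℕ → G) : ∀ j, j ≤ n →
    F1 f (fun t => if t < n - j then a else X t)
      = ((List.ofFn (fun i : Fin n => (tauop f a abar 1)^[(i : ℕ)] (X i))).drop (n - j)).foldr
          (mulop f a abar) (bop f a) := by
  intro j
  induction j with
  | zero =>
    intro _
    rw [List.drop_eq_nil_of_le (by simp), List.foldr_nil]
    exact F1_congr f fun t ht => by rw [if_pos (by omega : t < n - 0)]
  | succ j ih =>
    intro hj
    have hmn : n - (j + 1) < n := by omega
    rw [List.drop_eq_getElem_cons (by simpa using hmn), List.getElem_ofFn, List.foldr_cons]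
    by_cases hm1 : n - (j + 1) = n - 1
    · have hj0 : j = 0 := by omega
      subst hj0
      simp only [Nat.zero_add]
      have e2 : (tauop f a abar 1)^[(n - 1 : ℕ)] (X (n - 1))
          = tauop f a abar 1 (tauop f a abar (n - 2) (X (n - 1))) := by
        rw [tau_iter hA hs hn habar hn3 (k := n - 2) (by omega) (X (n - 1)),
          show n - 1 = n - 2 + 1 from by omega, Function.iterate_succ_apply']
      have e1 : F1 f (fun t => if t < n - 1 then a else X t)
          = F1 f (fun t => if t = n - 1 then X (n - 1) else a) := by
        refine F1_congr f fun t ht => ?_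
        beta_reduce
        split_ifs <;> first | rfl | omega | (congr 1 <;> omega)
      have e3 : List.drop (n - 1 + 1) (List.ofFn fun i : Fin n =>
          (tauop f a abar 1)^[(i : ℕ)] (X i)) = [] :=
        List.drop_eq_nil_of_le (by simp; omega)
      rw [e1, An_eq hA hs hn habar hn3 (X (n - 1)), e3, List.foldr_nil]
      congr 1
      exact e2.symm
    · have hm2 : n - (j + 1) ≤ n - 2 := by omega
      rw [peel hA hs hn habar hn3 hm2 X]
      have hstep : n - (j + 1) + 1 = n - j := by omega
      rw [hstep, ih (by omega)]
      congr 1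
      exact tau_iter hA hs hn habar hn3 hm2 (X (n - (j + 1)))

end
end HGaux

/-- Hosszú–Gluskin: every `n`-ary group is `(θ,b)`-derived from an ordinary
group structure on the same set. -/
theorem hosszu_gluskin {G : Type*} [Nonempty G] (n : ℕ) (hn : 2 ≤ n)
    (f : (Fin n → G) → G) (hf : IsPolyadicGroup n f) :
    ∃ (mul : G → G → G) (e : G) (inv : G → G) (θ : G → G) (b : G),
      (∀ x y z : G, mul (mul x y) z = mul x (mul y z)) ∧
      (∀ x : G, mul e x = x) ∧ (∀ x : G, mul x e = x) ∧
      (∀ x : G, mul (inv x) x = e) ∧ (∀ x : G, mul x (inv x) = e) ∧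
      Function.Bijective θ ∧
      (∀ x y : G, θ (mul x y) = mul (θ x) (θ y)) ∧
      θ b = b ∧
      (∀ x : G, θ^[n - 1] x = mul (mul b x) (inv b)) ∧
      (∀ x : Fin n → G,
        f x = (List.ofFn fun i : Fin n => θ^[(i : ℕ)] (x i)).foldr mul b) := by
  classical
  obtain ⟨hA, hs⟩ := hf
  have a : G := Classical.arbitrary G
  obtain ⟨abar, hab1, -⟩ := hs (fun _ => a) a ⟨n - 1, by omega⟩
  have habar : HGaux.F1 f (fun t => if t = n - 1 then abar else a) = a := by
    refine Eq.trans ?_ hab1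
    unfold HGaux.F1
    congr 1
    funext t
    simp only [Function.update_apply, Fin.ext_iff]
  have hassoc : ∀ x y z : G, HGaux.mulop f a abar (HGaux.mulop f a abar x y) z
      = HGaux.mulop f a abar x (HGaux.mulop f a abar y z) :=
    fun x y z => HGaux.mul_assocP x y z hA hn
  rcases eq_or_lt_of_le hn with h2 | h3'
  · -- n = 2
    subst h2
    have hel : ∀ y : G, HGaux.mulop f a abar abar y = y := by
      intro y
      refine Eq.trans (HGaux.F1_congr f (y := fun t => if t = 0 then abar
        else if t = 2 - 1 then y else a) fun t ht => ?_)
        (HGaux.dleft hA hs hn habar (i := 0) (by omega) y)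
      beta_reduce
      split_ifs <;> first | rfl | omega
    have her : ∀ y : G, HGaux.mulop f a abar y abar = y := by
      intro y
      refine Eq.trans (HGaux.F1_congr f (y := fun t => if t = 0 then y
        else if t = 1 then abar else a) fun t ht => ?_)
        (HGaux.dright hA hs hn habar (j := 1) (by omega) (by omega) y)
      beta_reduce
      split_ifs <;> first | rfl | omega
    have hexr : ∀ x : G, ∃ z, HGaux.mulop f a abar x z = abar :=
      fun x => (HGaux.mul_right_bij hs hn x).2 abar
    choose inv hinv using hexr
    have hinvbar : inv abar = abar := by
      have := hinv abar
      rwa [hel (inv abar)] at this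
    have hil : ∀ x : G, HGaux.mulop f a abar (inv x) x = abar := by
      intro x
      obtain ⟨w, hw'⟩ := (HGaux.mul_left_bij hs hn x).2 abar
      have hw : HGaux.mulop f a abar w x = abar := hw'
      have hwi : w = inv x := by
        calc w = HGaux.mulop f a abar w abar := (her w).symm
          _ = HGaux.mulop f a abar w (HGaux.mulop f a abar x (inv x)) := by rw [hinv x]
          _ = HGaux.mulop f a abar (HGaux.mulop f a abar w x) (inv x) := (hassoc _ _ _).symm
          _ = HGaux.mulop f a abar abar (inv x) := by rw [hw]
          _ = inv x := hel _
      rw [← hwi]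
      exact hw
    refine ⟨HGaux.mulop f a abar, abar, inv, id, abar, hassoc, hel, her, hil, hinv,
      Function.bijective_id, fun _ _ => rfl, rfl, ?_, ?_⟩
    · intro x
      simp only [Function.iterate_id, id_eq]
      rw [hassoc, hinvbar, her]
      exact (hel x).symm
    · intro x
      have hfx : f x = HGaux.mulop f a abar (x 0) (x 1) := by
        unfold HGaux.mulop HGaux.F1
        congr 1
        funext t
        fin_cases t <;> simp
      rw [hfx]
      simp only [List.ofFn_succ, List.ofFn_zero, Function.iterate_id, id_eq,
        List.foldr_cons, List.foldr_nil]
      rw [her]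
      rfl
  · -- n ≥ 3
    have hn3 : 3 ≤ n := h3'
    have hel : ∀ y : G, HGaux.mulop f a abar a y = y := HGaux.mul_a_left hA hs hn habar hn3
    have her : ∀ y : G, HGaux.mulop f a abar y a = y := HGaux.mul_a_right hA hs hn habar hn3
    have hexr : ∀ x : G, ∃ z, HGaux.mulop f a abar x z = a :=
      fun x => (HGaux.mul_right_bij hs hn x).2 a
    choose inv hinv using hexr
    have hil : ∀ x : G, HGaux.mulop f a abar (inv x) x = a := by
      intro x
      obtain ⟨w, hw'⟩ := (HGaux.mul_left_bij hs hn x).2 a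
      have hw : HGaux.mulop f a abar w x = a := hw'
      have hwi : w = inv x := by
        calc w = HGaux.mulop f a abar w a := (her w).symm
          _ = HGaux.mulop f a abar w (HGaux.mulop f a abar x (inv x)) := by rw [hinv x]
          _ = HGaux.mulop f a abar (HGaux.mulop f a abar w x) (inv x) := (hassoc _ _ _).symm
          _ = HGaux.mulop f a abar a (inv x) := by rw [hw]
          _ = inv x := hel _
      rw [← hwi]
      exact hw
    have hbij : Function.Bijective (HGaux.tauop f a abar 1) := by
      have key : (HGaux.tauop f a abar 1 : G → G) = fun z => f (Function.update
          (fun t : Fin n => if (t : ℕ) = 2 then abar else a) ⟨1, by omega⟩ z) := by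
        funext z
        unfold HGaux.tauop HGaux.F1
        congr 1
        funext t
        have htlt := t.isLt
        simp only [Function.update_apply, Fin.ext_iff]
        split_ifs <;> first | rfl | omega
      rw [key]
      exact HGaux.solv_bij hs _ _
    have e2 : ∀ x : G, (HGaux.tauop f a abar 1)^[n - 1] x
        = HGaux.tauop f a abar 1 (HGaux.tauop f a abar (n - 2) x) := by
      intro x
      rw [HGaux.tau_iter hA hs hn habar hn3 (k := n - 2) (by omega) x,
        show n - 1 = n - 2 + 1 from by omega, Function.iterate_succ_apply']
    have hconj : ∀ x : G, (HGaux.tauop f a abar 1)^[n - 1] x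
        = HGaux.mulop f a abar (HGaux.mulop f a abar (HGaux.bop f a) x) (inv (HGaux.bop f a)) := by
      intro x
      have h1 : HGaux.mulop f a abar ((HGaux.tauop f a abar 1)^[n - 1] x) (HGaux.bop f a)
          = HGaux.mulop f a abar (HGaux.bop f a) x := by
        rw [e2 x, ← HGaux.An_eq hA hs hn habar hn3 x,
          HGaux.An_eq_b_mul hA hs hn habar hn3 x]
      calc (HGaux.tauop f a abar 1)^[n - 1] x
          = HGaux.mulop f a abar ((HGaux.tauop f a abar 1)^[n - 1] x) a := (her _).symm
        _ = HGaux.mulop f a abar ((HGaux.tauop f a abar 1)^[n - 1] x)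
            (HGaux.mulop f a abar (HGaux.bop f a) (inv (HGaux.bop f a))) := by
            rw [hinv (HGaux.bop f a)]
        _ = HGaux.mulop f a abar (HGaux.mulop f a abar ((HGaux.tauop f a abar 1)^[n - 1] x)
            (HGaux.bop f a)) (inv (HGaux.bop f a)) := (hassoc _ _ _).symm
        _ = HGaux.mulop f a abar (HGaux.mulop f a abar (HGaux.bop f a) x)
            (inv (HGaux.bop f a)) := by rw [h1]
    refine ⟨HGaux.mulop f a abar, a, inv, HGaux.tauop f a abar 1, HGaux.bop f a, hassoc,
      hel, her, hil, hinv, hbij, HGaux.theta_hom hA hs hn habar hn3,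
      HGaux.theta_bop hA hs hn habar hn3, hconj, ?_⟩
    intro x
    set X : ℕ → G := fun t => if h : t < n then x ⟨t, h⟩ else a with hX
    have h0 := HGaux.chain hA hs hn habar hn3 X n le_rfl
    have hfx : f x = HGaux.F1 f (fun t => if t < n - n then a else X t) := by
      unfold HGaux.F1
      congr 1
      funext t
      beta_reduce
      rw [if_neg (c := ((t : ℕ) < n - n)) (by omega)]
      simp only [hX]
      rw [dif_pos t.isLt]
      try exact (congrArg x (Fin.eta t t.isLt)).symm
    have hlist : (List.ofFn fun i : Fin n => (HGaux.tauop f a abar 1)^[(i : ℕ)] (X i))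
        = List.ofFn fun i : Fin n => (HGaux.tauop f a abar 1)^[(i : ℕ)] (x i) := by
      congr 1
      funext i
      simp only [hX]
      rw [dif_pos i.isLt]
      try exact congrArg _ (congrArg x (Fin.eta i i.isLt))
    rw [hfx, h0, Nat.sub_self, List.drop_zero, hlist]
end

section
/- Let n ≥ 3 and let (G, f) be an n-ary group, and fix a ∈ G. Define x ∙ y = f(x, a, ..., a, y) (with n−2 copies of a). Then (G, ∙) is a group whose identity element is the skew element ā of a, and the inverse of x ∈ G in (G, ∙) is f(ā, x, ..., x, x̄, ā) (with n−3 copies of x), where x̄ is the skew element of x. -/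
/-- The binary operation of the retract of `(G, f)` over `a`:
`x ∙ y = f(x, a, …, a, y)` (with `n-2` copies of `a`). -/
def retMul (n : ℕ) {G : Type*} (f : (Fin n → G) → G) (a x y : G) : G :=
  f (fun t : Fin n => if (t : ℕ) = 0 then x else if (t : ℕ) = n - 1 then y else a)

theorem assoc2 {G : Type*} (n : ℕ) (f : (Fin n → G) → G) (ha : PolyAssoc n f)
    (i j : ℕ) (hij : i ≤ j) (hj : j < n) (w : ℕ → G) (c d : G) (A B : Fin n → G)
    (hc : f (fun s : Fin n => w (i + (s : ℕ))) = c)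
    (hd : f (fun s : Fin n => w (j + (s : ℕ))) = d)
    (hA : ∀ t : Fin n,
      (if (t : ℕ) < i then w (t : ℕ) else if (t : ℕ) = i then c else w ((t : ℕ) + n - 1)) = A t)
    (hB : ∀ t : Fin n,
      (if (t : ℕ) < j then w (t : ℕ) else if (t : ℕ) = j then d else w ((t : ℕ) + n - 1)) = B t) :
    f A = f B := by
  have h := ha i j hij hj w
  simp only [hc, hd] at h
  rwa [show (fun t : Fin n => if (t : ℕ) < i then w (t : ℕ) else if (t : ℕ) = i then c
      else w ((t : ℕ) + n - 1)) = A from funext hA,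
    show (fun t : Fin n => if (t : ℕ) < j then w (t : ℕ) else if (t : ℕ) = j then d
      else w ((t : ℕ) + n - 1)) = B from funext hB] at h

theorem surjConst {G : Type*} (n : ℕ) (f : (Fin n → G) → G) (hs : PolySolv n f)
    (k : ℕ) (hk : k < n) (b c : G) :
    ∃ z : G, f (fun t : Fin n => if (t : ℕ) = k then z else b) = c := by
  obtain ⟨z, hz, -⟩ := hs (fun _ => b) c ⟨k, hk⟩
  refine ⟨z, ?_⟩
  rw [← hz]
  congr 1
  funext t
  rw [Function.update_apply]
  simp [Fin.ext_iff]

theorem cancelConst {G : Type*} (n : ℕ) (f : (Fin n → G) → G) (hs : PolySolv n f)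
    (k : ℕ) (hk : k < n) (b : G) {u v : G}
    (h : f (fun t : Fin n => if (t : ℕ) = k then u else b) =
         f (fun t : Fin n => if (t : ℕ) = k then v else b)) : u = v := by
  have e : ∀ z : G, (fun t : Fin n => if (t : ℕ) = k then z else b) =
      Function.update (fun _ => b) (⟨k, hk⟩ : Fin n) z := by
    intro z
    funext t
    rw [Function.update_apply]
    simp [Fin.ext_iff]
  rw [e u, e v] at h
  exact (hs (fun _ => b) (f (Function.update (fun _ => b) (⟨k, hk⟩ : Fin n) v)) ⟨k, hk⟩).unique h rfl

/-- `f(c, x^{n-2}, x̄) = c`. -/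
theorem lemR {G : Type*} (n : ℕ) (f : (Fin n → G) → G) (hn : 3 ≤ n)
    (ha : PolyAssoc n f) (hs : PolySolv n f) (x xb : G)
    (hx : f (fun t : Fin n => if (t : ℕ) = n - 1 then xb else x) = x) (c : G) :
    f (fun t : Fin n => if (t : ℕ) = 0 then c else if (t : ℕ) = n - 1 then xb else x) = c := by
  obtain ⟨y, hy⟩ := surjConst n f hs 0 (by omega) x c
  have h2 := assoc2 n f ha 0 (n-1) (by omega) (by omega)
      (fun k => if k = 0 then y else if k = 2*n-2 then xb else x) c x
      (fun t : Fin n => if (t : ℕ) = 0 then c else if (t : ℕ) = n - 1 then xb else x)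
      (fun t : Fin n => if (t : ℕ) = 0 then y else x)
      ?_ ?_ ?_ ?_
  · rw [h2]; exact hy
  · refine Eq.trans (congrArg f (funext fun s => ?_)) hy
    have hs' := s.isLt; split_ifs <;> first | rfl | omega
  · refine Eq.trans (congrArg f (funext fun s => ?_)) hx
    have hs' := s.isLt; split_ifs <;> first | rfl | omega
  · intro t; have ht := t.isLt
    split_ifs <;> first | rfl | omega
  · intro t; have ht := t.isLt
    split_ifs <;> first | rfl | omega

/-- `f(x̄, x^{n-2}, y) = y`. -/
theorem lemL {G : Type*} (n : ℕ) (f : (Fin n → G) → G) (hn : 3 ≤ n)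
    (ha : PolyAssoc n f) (hs : PolySolv n f) (x xb : G)
    (hx : f (fun t : Fin n => if (t : ℕ) = n - 1 then xb else x) = x) (y : G) :
    f (fun t : Fin n => if (t : ℕ) = 0 then xb else if (t : ℕ) = n - 1 then y else x) = y := by
  have h2 := assoc2 n f ha 0 (n-1) (by omega) (by omega)
      (fun k => if k = n-1 then xb else if k = 2*n-2 then y else x)
      x (f (fun s : Fin n => if (s : ℕ) = 0 then xb else if (s : ℕ) = n - 1 then y else x))
      (fun t : Fin n => if (t : ℕ) = n - 1 then y else x)
      (fun t : Fin n => if (t : ℕ) = n - 1 then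
        f (fun s : Fin n => if (s : ℕ) = 0 then xb else if (s : ℕ) = n - 1 then y else x) else x)
      ?_ ?_ ?_ ?_
  · exact (cancelConst n f hs (n-1) (by omega) x h2).symm
  · refine Eq.trans (congrArg f (funext fun s => ?_)) hx
    have hs' := s.isLt; split_ifs <;> first | rfl | omega
  · congr 1; funext s
    have hs' := s.isLt; split_ifs <;> first | rfl | omega
  · intro t; have ht := t.isLt
    split_ifs <;> first | rfl | omega
  · intro t; have ht := t.isLt
    split_ifs <;> first | rfl | omega

/-- `f(x^{n-2}, x̄, y) = y`. -/
theorem lemM {G : Type*} (n : ℕ) (f : (Fin n → G) → G) (hn : 3 ≤ n)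
    (ha : PolyAssoc n f) (hs : PolySolv n f) (x xb : G)
    (hx : f (fun t : Fin n => if (t : ℕ) = n - 1 then xb else x) = x) (z : G) :
    f (fun t : Fin n => if (t : ℕ) = n - 2 then xb else if (t : ℕ) = n - 1 then z else x) = z := by
  obtain ⟨y, hy⟩ := surjConst n f hs (n-1) (by omega) x z
  have h2 := assoc2 n f ha (n-2) (n-1) (by omega) (by omega)
      (fun k => if k = n-2 then xb else if k = 2*n-2 then y else x)
      x (f (fun s : Fin n => if (s : ℕ) = n - 1 then y else x))
      (fun t : Fin n => if (t : ℕ) = n - 1 then y else x)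
      (fun t : Fin n => if (t : ℕ) = n - 2 then xb else if (t : ℕ) = n - 1 then
        f (fun s : Fin n => if (s : ℕ) = n - 1 then y else x) else x)
      ?_ ?_ ?_ ?_
  · simp only [hy] at h2
    exact h2.symm
  · refine Eq.trans (congrArg f (funext fun s => ?_)) (lemL n f hn ha hs x xb hx x)
    have hs' := s.isLt; split_ifs <;> first | rfl | omega
  · congr 1; funext s
    have hs' := s.isLt; split_ifs <;> first | rfl | omega
  · intro t; have ht := t.isLt
    split_ifs <;> first | rfl | omega
  · intro t; have ht := t.isLt
    split_ifs <;> first | rfl | omega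

/-- `f(y, x^{n-3}, x̄, x) = y`. -/
theorem lemN {G : Type*} (n : ℕ) (f : (Fin n → G) → G) (hn : 3 ≤ n)
    (ha : PolyAssoc n f) (hs : PolySolv n f) (x xb : G)
    (hx : f (fun t : Fin n => if (t : ℕ) = n - 1 then xb else x) = x) (y : G) :
    f (fun t : Fin n => if (t : ℕ) = 0 then y else if (t : ℕ) = n - 2 then xb else x) = y := by
  have h2 := assoc2 n f ha 0 (n-2) (by omega) (by omega)
      (fun k => if k = 0 then y else if k = n-2 then xb else if k = 2*n-2 then xb else x)
      (f (fun s : Fin n => if (s : ℕ) = 0 then y else if (s : ℕ) = n - 2 then xb else x)) x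
      (fun t : Fin n => if (t : ℕ) = 0 then
        f (fun s : Fin n => if (s : ℕ) = 0 then y else if (s : ℕ) = n - 2 then xb else x)
        else if (t : ℕ) = n - 1 then xb else x)
      (fun t : Fin n => if (t : ℕ) = 0 then y else if (t : ℕ) = n - 1 then xb else x)
      ?_ ?_ ?_ ?_
  · have e1 := lemR n f hn ha hs x xb hx
      (f (fun s : Fin n => if (s : ℕ) = 0 then y else if (s : ℕ) = n - 2 then xb else x))
    have e2 := lemR n f hn ha hs x xb hx y
    exact e1.symm.trans (h2.trans e2)
  · congr 1; funext s
    have hs' := s.isLt; split_ifs <;> first | rfl | omega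
  · refine Eq.trans (congrArg f (funext fun s => ?_)) (lemL n f hn ha hs x xb hx x)
    have hs' := s.isLt; split_ifs <;> first | rfl | omega
  · intro t; have ht := t.isLt
    split_ifs <;> first | rfl | omega
  · intro t; have ht := t.isLt
    split_ifs <;> first | rfl | omega

set_option maxHeartbeats 1600000 in
/-- the retract `ret_a(G,f)` is a group with identity the skew element `ā`
and inverse `x ↦ f(ā, x, …, x, x̄, ā)` (with `n-3` copies of `x`). -/
theorem retract_is_group {G : Type*} (n : ℕ) (hn : 3 ≤ n)
    (f : (Fin n → G) → G) (hf : IsPolyadicGroup n f)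
    (a : G) (sk : G → G)
    (hsk : ∀ x : G, f (fun t : Fin n => if (t : ℕ) = n - 1 then sk x else x) = x) :
    (∀ x y z : G,
      retMul n f a (retMul n f a x y) z = retMul n f a x (retMul n f a y z)) ∧
    (∀ x : G, retMul n f a (sk a) x = x) ∧
    (∀ x : G, retMul n f a x (sk a) = x) ∧
    (∀ x : G,
      retMul n f a x
        (f (fun t : Fin n => if (t : ℕ) = 0 then sk a
            else if (t : ℕ) = n - 2 then sk x
            else if (t : ℕ) = n - 1 then sk a else x)) = sk a ∧
      retMul n f a
        (f (fun t : Fin n => if (t : ℕ) = 0 then sk a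
            else if (t : ℕ) = n - 2 then sk x
            else if (t : ℕ) = n - 1 then sk a else x)) x = sk a) := by
  obtain ⟨ha, hs⟩ := hf
  refine ⟨?_, ?_, ?_, ?_⟩
  · -- associativity
    intro x y z
    simp only [retMul]
    refine assoc2 n f ha 0 (n-1) (by omega) (by omega)
      (fun k => if k = 0 then x else if k = n-1 then y else if k = 2*n-2 then z else a)
      (f (fun s : Fin n => if (s : ℕ) = 0 then x else if (s : ℕ) = n - 1 then y else a))
      (f (fun s : Fin n => if (s : ℕ) = 0 then y else if (s : ℕ) = n - 1 then z else a))
      _ _ ?_ ?_ ?_ ?_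
    · congr 1; funext s
      have hs' := s.isLt; split_ifs <;> first | rfl | omega
    · congr 1; funext s
      have hs' := s.isLt; split_ifs <;> first | rfl | omega
    · intro t; have ht := t.isLt
      split_ifs <;> first | rfl | omega
    · intro t; have ht := t.isLt
      split_ifs <;> first | rfl | omega
  · -- left identity
    intro x
    exact lemL n f hn ha hs a (sk a) (hsk a) x
  · -- right identity
    intro x
    exact lemR n f hn ha hs a (sk a) (hsk a) x
  · -- inverses
    intro x
    constructor
    · -- right inverse
      show f (fun t : Fin n => if (t : ℕ) = 0 then x else if (t : ℕ) = n - 1 then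
          (f (fun t : Fin n => if (t : ℕ) = 0 then sk a
            else if (t : ℕ) = n - 2 then sk x
            else if (t : ℕ) = n - 1 then sk a else x)) else a) = sk a
      have h2 := assoc2 n f ha 0 (n-1) (by omega) (by omega)
        (fun k => if k = 0 then x else if k = n-1 then sk a else if k = 2*n-3 then sk x
          else if k = 2*n-2 then sk a else if k < n-1 then a else x)
        x
        (f (fun t : Fin n => if (t : ℕ) = 0 then sk a
            else if (t : ℕ) = n - 2 then sk x
            else if (t : ℕ) = n - 1 then sk a else x))
        (fun t : Fin n => if (t : ℕ) = n - 2 then sk x else if (t : ℕ) = n - 1 then sk a else x)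
        (fun t : Fin n => if (t : ℕ) = 0 then x else if (t : ℕ) = n - 1 then
          (f (fun t : Fin n => if (t : ℕ) = 0 then sk a
            else if (t : ℕ) = n - 2 then sk x
            else if (t : ℕ) = n - 1 then sk a else x)) else a)
        ?_ ?_ ?_ ?_
      · exact h2.symm.trans (lemM n f hn ha hs x (sk x) (hsk x) (sk a))
      · refine Eq.trans (congrArg f (funext fun s => ?_)) (lemR n f hn ha hs a (sk a) (hsk a) x)
        have hs' := s.isLt; split_ifs <;> first | rfl | omega
      · congr 1; funext s
        have hs' := s.isLt; split_ifs <;> first | rfl | omega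
      · intro t; have ht := t.isLt
        split_ifs <;> first | rfl | omega
      · intro t; have ht := t.isLt
        split_ifs <;> first | rfl | omega
    · -- left inverse
      show f (fun t : Fin n => if (t : ℕ) = 0 then
          (f (fun t : Fin n => if (t : ℕ) = 0 then sk a
            else if (t : ℕ) = n - 2 then sk x
            else if (t : ℕ) = n - 1 then sk a else x))
          else if (t : ℕ) = n - 1 then x else a) = sk a
      have h2 := assoc2 n f ha 0 (n-1) (by omega) (by omega)
        (fun k => if k = 0 then sk a else if k = n-2 then sk x else if k = n-1 then sk a
          else if k = 2*n-2 then x else if k < n-1 then x else a)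
        (f (fun t : Fin n => if (t : ℕ) = 0 then sk a
            else if (t : ℕ) = n - 2 then sk x
            else if (t : ℕ) = n - 1 then sk a else x))
        x
        (fun t : Fin n => if (t : ℕ) = 0 then
          (f (fun t : Fin n => if (t : ℕ) = 0 then sk a
            else if (t : ℕ) = n - 2 then sk x
            else if (t : ℕ) = n - 1 then sk a else x))
          else if (t : ℕ) = n - 1 then x else a)
        (fun t : Fin n => if (t : ℕ) = 0 then sk a else if (t : ℕ) = n - 2 then sk x else x)
        ?_ ?_ ?_ ?_
      · exact h2.trans (lemN n f hn ha hs x (sk x) (hsk x) (sk a))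
      · congr 1; funext s
        have hs' := s.isLt; split_ifs <;> first | rfl | omega
      · refine Eq.trans (congrArg f (funext fun s => ?_)) (lemL n f hn ha hs a (sk a) (hsk a) x)
        have hs' := s.isLt; split_ifs <;> first | rfl | omega
      · intro t; have ht := t.isLt
        split_ifs <;> first | rfl | omega
      · intro t; have ht := t.isLt
        split_ifs <;> first | rfl | omega
end

section
/- Let n ≥ 2 and let (G, f) be an n-ary group. Then for any two elements a, c ∈ G, the retract groups ret_a(G, f) and ret_c(G, f) are isomorphic as groups. -/
/-- any two retracts `ret_a(G,f)` and `ret_c(G,f)` of an `n`-ary group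
are isomorphic as groups. -/
theorem retracts_isomorphic {G : Type*} (n : ℕ) (hn : 2 ≤ n)
    (f : (Fin n → G) → G) (hf : IsPolyadicGroup n f) (a c : G) :
    ∃ φ : G ≃ G, ∀ x y : G, φ (retMul n f a x y) = retMul n f c (φ x) (φ y) := by
  obtain ⟨hassoc, hsolv⟩ := hf
  -- mixed associativity of retract multiplications
  have key2 : ∀ p q x y z : G,
      retMul n f q (retMul n f p x y) z = retMul n f p x (retMul n f q y z) := by
    intro p q x y z
    have h := hassoc 0 (n - 1) (by omega) (by omega)
      (fun k => if k = 0 then x else if k = n - 1 then y else if k = 2 * n - 2 then z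
        else if k < n - 1 then p else q)
    have hL : retMul n f q (retMul n f p x y) z =
        f (fun t : Fin n =>
          if (t : ℕ) < 0 then
            (fun k => if k = 0 then x else if k = n - 1 then y else if k = 2 * n - 2 then z
              else if k < n - 1 then p else q) (t : ℕ)
          else if (t : ℕ) = 0 then
            f (fun s : Fin n =>
              (fun k => if k = 0 then x else if k = n - 1 then y else if k = 2 * n - 2 then z
                else if k < n - 1 then p else q) (0 + (s : ℕ)))
          else
            (fun k => if k = 0 then x else if k = n - 1 then y else if k = 2 * n - 2 then z
              else if k < n - 1 then p else q) ((t : ℕ) + n - 1)) := by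
      unfold retMul
      congr 1
      funext t
      have ht := t.isLt
      simp only [Nat.zero_add, Nat.not_lt_zero, if_false]
      by_cases h0 : (t : ℕ) = 0
      · rw [if_pos h0, if_pos h0]
        congr 1
        funext s
        have hs := s.isLt
        split_ifs <;> first | rfl | omega
      · rw [if_neg h0, if_neg h0]
        split_ifs <;> first | rfl | omega
    have hR : retMul n f p x (retMul n f q y z) =
        f (fun t : Fin n =>
          if (t : ℕ) < n - 1 then
            (fun k => if k = 0 then x else if k = n - 1 then y else if k = 2 * n - 2 then z
              else if k < n - 1 then p else q) (t : ℕ)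
          else if (t : ℕ) = n - 1 then
            f (fun s : Fin n =>
              (fun k => if k = 0 then x else if k = n - 1 then y else if k = 2 * n - 2 then z
                else if k < n - 1 then p else q) (n - 1 + (s : ℕ)))
          else
            (fun k => if k = 0 then x else if k = n - 1 then y else if k = 2 * n - 2 then z
              else if k < n - 1 then p else q) ((t : ℕ) + n - 1)) := by
      unfold retMul
      congr 1
      funext t
      have ht := t.isLt
      by_cases h1 : (t : ℕ) < n - 1
      · rw [if_pos h1]
        simp only
        split_ifs <;> first | rfl | omega
      · have h2 : (t : ℕ) = n - 1 := by omega
        rw [if_neg h1, if_pos h2, if_neg (show ¬(t : ℕ) = 0 by omega), if_pos h2]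
        congr 1
        funext s
        have hs := s.isLt
        simp only
        split_ifs <;> first | rfl | omega
    rw [hL, hR]
    exact h
  -- solvability in the first slot
  have lsolv : ∀ q x b : G, ∃! t : G, retMul n f q t x = b := by
    intro q x b
    have h := hsolv (fun s : Fin n => if (s : ℕ) = n - 1 then x else q) b ⟨0, by omega⟩
    have hfun : ∀ t : G,
        Function.update (fun s : Fin n => if (s : ℕ) = n - 1 then x else q) ⟨0, by omega⟩ t =
        fun s : Fin n => if (s : ℕ) = 0 then t else if (s : ℕ) = n - 1 then x else q := by
      intro t
      funext s
      rw [Function.update_apply]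
      by_cases h0 : (s : ℕ) = 0
      · rw [if_pos (Fin.ext h0), if_pos h0]
      · rw [if_neg (fun hh => h0 (by simpa [Fin.ext_iff] using hh)), if_neg h0]
    simp only [hfun] at h
    simpa only [retMul] using h
  -- solvability in the last slot
  have rsolv : ∀ q x b : G, ∃! t : G, retMul n f q x t = b := by
    intro q x b
    have h := hsolv (fun s : Fin n => if (s : ℕ) = 0 then x else q) b ⟨n - 1, by omega⟩
    have hfun : ∀ t : G,
        Function.update (fun s : Fin n => if (s : ℕ) = 0 then x else q) ⟨n - 1, by omega⟩ t =
        fun s : Fin n => if (s : ℕ) = 0 then x else if (s : ℕ) = n - 1 then t else q := by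
      intro t
      funext s
      rw [Function.update_apply]
      by_cases h1 : (s : ℕ) = n - 1
      · rw [if_pos (Fin.ext h1), if_neg (show ¬(s : ℕ) = 0 by omega), if_pos h1]
      · rw [if_neg (fun hh => h1 (by simpa [Fin.ext_iff] using hh))]
        split_ifs <;> first | rfl | omega
    simp only [hfun] at h
    simpa only [retMul] using h
  -- a left identity for the retract at c
  obtain ⟨e, he, -⟩ := lsolv c c c
  have hid : ∀ y, retMul n f c e y = y := by
    intro y
    obtain ⟨s, hs, -⟩ := rsolv c c y
    calc retMul n f c e y = retMul n f c e (retMul n f c c s) := by rw [hs]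
      _ = retMul n f c (retMul n f c e c) s := (key2 c c e c s).symm
      _ = y := by rw [he, hs]
  -- the isomorphism
  have hbij : Function.Bijective (fun x => retMul n f a x e) := by
    constructor
    · intro x y hxy
      obtain ⟨t, -, hu⟩ := lsolv a e (retMul n f a y e)
      exact (hu x hxy).trans (hu y rfl).symm
    · intro b
      obtain ⟨t, ht, -⟩ := lsolv a e b
      exact ⟨t, ht⟩
  refine ⟨Equiv.ofBijective _ hbij, fun x y => ?_⟩
  show retMul n f a (retMul n f a x y) e = retMul n f c (retMul n f a x e) (retMul n f a y e)
  rw [key2 a a, key2 a c, hid]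
end

section
/- Let n ≥ 2, let (G, ·) be a group with automorphism θ and b ∈ G satisfying θ(b) = b and θ^{n-1}(x) = b·x·b⁻¹ for all x, and let (H, ∗) be a group with automorphism η and c ∈ H satisfying η(c) = c and η^{n-1}(y) = c∗y∗c⁻¹ for all y. Let f and h be the derived n-ary operations of der_{θ,b}(G, ·) and der_{η,c}(H, ∗) respectively. If ψ : G → H satisfies ψ(f(x₁,...,xₙ)) = h(ψ(x₁),...,ψ(xₙ)) for all x₁,...,xₙ ∈ G, then there exist a ∈ H and a group homomorphism φ : (G, ·) → (H, ∗) such that ψ(x) = φ(x) ∗ a for all x ∈ G, and moreover h(a, a, ..., a) = φ(b) ∗ a and φ ∘ θ = I_a ∘ η ∘ φ, where I_a denotes the inner automorphism y ↦ a ∗ y ∗ a⁻¹ of H. -/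
section

variable {G H : Type*} [Group G] [Group H]

@[simp]
lemma derOp_const_one (n : ℕ) (θ : MulAut G) (b : G) : derOp n θ b (fun _ => 1) = b := by
  simp [derOp]

lemma derOp_cons_cons (m : ℕ) (θ : MulAut G) (b u v : G) (w : Fin m → G) :
    derOp (m + 2) θ b (Fin.cons u (Fin.cons v w)) =
      u * θ v * derOp m θ b (fun i => (θ ^ 2) (w i)) := by
  simp [derOp, List.ofFn_succ, pow_succ, mul_assoc]

lemma exists_forall_map_mul_apply_mul {m : ℕ} {θ : MulAut G} {b : G} {η : MulAut H} {c : H}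
    {ψ : G → H}
    (hψ : ∀ x : Fin (m + 2) → G, ψ (derOp (m + 2) θ b x) = derOp (m + 2) η c (ψ ∘ x)) :
    ∃ M : H, ∀ u v : G, ψ (u * θ v * b) = ψ u * η (ψ v) * M := by
  refine ⟨derOp m η c fun _ => (η ^ 2) (ψ 1), fun u v => ?_⟩
  simpa [derOp_cons_cons, Fin.comp_cons, mul_assoc] using
    hψ (Fin.cons u (Fin.cons v fun _ => 1))

variable {ψ : G → H} {θ : MulAut G} {η : MulAut H} {b : G} {M : H}

lemma map_mul_of_forall_map_mul_apply_mul
    (hM : ∀ u v : G, ψ (u * θ v * b) = ψ u * η (ψ v) * M) (u w : G) :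
    ψ (u * w) = ψ u * (ψ 1)⁻¹ * ψ w := by
  obtain ⟨v, rfl⟩ : ∃ v, θ v * b = w := ⟨θ.symm (w * b⁻¹), by simp⟩
  rw [← mul_assoc, hM u v, ← one_mul (θ v), hM 1 v]
  group

lemma map_apply_of_forall_map_mul_apply_mul
    (hM : ∀ u v : G, ψ (u * θ v * b) = ψ u * η (ψ v) * M) (x : G) :
    ψ (θ x) = ψ 1 * η (ψ x) * (η (ψ 1))⁻¹ := by
  have hb : ψ b = ψ 1 * η (ψ 1) * M := by simpa using hM 1 1
  have hθx : ψ (θ x) * (ψ 1)⁻¹ * ψ b = ψ 1 * η (ψ x) * M := by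
    rw [← map_mul_of_forall_map_mul_apply_mul hM, ← one_mul (θ x), hM]
  rw [hb] at hθx
  rw [eq_mul_inv_iff_mul_eq, ← mul_left_inj M]
  simpa [mul_assoc] using hθx

@[simps]
def MonoidHom.ofMapMul (ψ : G → H) (hψ : ∀ u w : G, ψ (u * w) = ψ u * (ψ 1)⁻¹ * ψ w) :
    G →* H where
  toFun x := ψ x * (ψ 1)⁻¹
  map_one' := mul_inv_cancel _
  map_mul' u w := by rw [hψ]; group

end

theorem polyadic_hom_decomposition_general {G H : Type*} [Group G] [Group H] (n : ℕ) (hn : 2 ≤ n)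
    (θ : MulAut G) (b : G)
    (η : MulAut H) (c : H)
    (ψ : G → H)
    (hψ : ∀ x : Fin n → G, ψ (derOp n θ b x) = derOp n η c (fun i => ψ (x i))) :
    ∃ (a : H) (φ : G →* H),
      (∀ x : G, ψ x = φ x * a) ∧
      derOp n η c (fun _ => a) = φ b * a ∧
      (∀ x : G, φ (θ x) = a * η (φ x) * a⁻¹) := by
  obtain ⟨m, rfl⟩ : ∃ m, n = m + 2 := ⟨n - 2, by omega⟩
  obtain ⟨M, hM⟩ := exists_forall_map_mul_apply_mul hψ
  refine ⟨ψ 1, MonoidHom.ofMapMul ψ (map_mul_of_forall_map_mul_apply_mul hM),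
    fun x => by simp, ?_, fun x => ?_⟩
  · simpa using (hψ fun _ => 1).symm
  · simp only [MonoidHom.ofMapMul_apply, map_apply_of_forall_map_mul_apply_mul hM, map_mul,
      map_inv]
    group

/-- every homomorphism of derived polyadic groups has the form
`ψ = R(a) ∘ φ` for a group homomorphism `φ` and an element `a` satisfying the two
compatibility conditions. -/
theorem polyadic_hom_decomposition {G H : Type*} [Group G] [Group H] (n : ℕ) (hn : 2 ≤ n)
    (θ : MulAut G) (b : G) (hθb : θ b = b)
    (hθn : ∀ x : G, (θ ^ (n - 1)) x = b * x * b⁻¹)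
    (η : MulAut H) (c : H) (hηc : η c = c)
    (hηn : ∀ y : H, (η ^ (n - 1)) y = c * y * c⁻¹)
    (ψ : G → H)
    (hψ : ∀ x : Fin n → G, ψ (derOp n θ b x) = derOp n η c (fun i => ψ (x i))) :
    ∃ (a : H) (φ : G →* H),
      (∀ x : G, ψ x = φ x * a) ∧
      derOp n η c (fun _ => a) = φ b * a ∧
      (∀ x : G, φ (θ x) = a * η (φ x) * a⁻¹) :=
  polyadic_hom_decomposition_general n hn θ b η c ψ hψ
end

section
/- Let n ≥ 2, let (G, ·) be a group with automorphism θ and b ∈ G satisfying θ(b) = b and θ^{n-1}(x) = b·x·b⁻¹ for all x, and let (H, ∗) be a group with automorphism η and c ∈ H satisfying η(c) = c and η^{n-1}(y) = c∗y∗c⁻¹ for all y. Let f and h be the derived n-ary operations of der_{θ,b}(G, ·) and der_{η,c}(H, ∗) respectively. Suppose a ∈ H and φ : (G, ·) → (H, ∗) is a group homomorphism such that h(a, a, ..., a) = φ(b) ∗ a and φ ∘ θ = I_a ∘ η ∘ φ, where I_a(y) = a ∗ y ∗ a⁻¹. Then the map ψ(x) = φ(x) ∗ a satisfies ψ(f(x₁,...,xₙ))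 = h(ψ(x₁),...,ψ(xₙ)) for all x₁,...,xₙ ∈ G, i.e., ψ is a homomorphism of n-ary groups (G, f) → (H, h). -/
private def Ak {H : Type*} [Group H] (η : MulAut H) (a : H) (k : ℕ) : H :=
  (List.ofFn fun i : Fin k => (η ^ (i : ℕ)) a).prod

private lemma Ak_zero {H : Type*} [Group H] (η : MulAut H) (a : H) : Ak η a 0 = 1 := by
  simp [Ak]

private lemma Ak_succ {H : Type*} [Group H] (η : MulAut H) (a : H) (k : ℕ) :
    Ak η a (k + 1) = a * η (Ak η a k) := by
  have : η (Ak η a k) = (List.ofFn fun i : Fin k => (η ^ ((i : ℕ) + 1)) a).prod := by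
    rw [Ak, map_list_prod η]
    simp [List.map_ofFn, Function.comp_def, pow_succ']
  rw [Ak, List.ofFn_succ, List.prod_cons, this]
  simp

private lemma Ak_succ' {H : Type*} [Group H] (η : MulAut H) (a : H) (k : ℕ) :
    Ak η a (k + 1) = Ak η a k * (η ^ k) a := by
  rw [Ak, List.ofFn_succ', List.concat_eq_append, List.prod_append]
  simp [Ak]

private lemma key_conj {G H : Type*} [Group G] [Group H] (θ : MulAut G) (η : MulAut H)
    (a : H) (φ : G →* H) (hφθ : ∀ x : G, φ (θ x) = a * η (φ x) * a⁻¹) :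
    ∀ (k : ℕ) (y : G), φ ((θ ^ k) y) = Ak η a k * (η ^ k) (φ y) * (Ak η a k)⁻¹ := by
  intro k
  induction k with
  | zero => intro y; simp [Ak_zero]
  | succ k ih =>
    intro y
    have h1 : (θ ^ (k + 1)) y = θ ((θ ^ k) y) := by
      rw [pow_succ']; rfl
    have h2 : (η ^ (k + 1)) (φ y) = η ((η ^ k) (φ y)) := by
      rw [pow_succ']; rfl
    rw [h1, hφθ, ih, h2, Ak_succ]
    simp only [map_mul, map_inv]
    group

private lemma main_prod {G H : Type*} [Group G] [Group H] (θ : MulAut G) (η : MulAut H)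
    (a : H) (φ : G →* H) (hφθ : ∀ x : G, φ (θ x) = a * η (φ x) * a⁻¹) :
    ∀ (k : ℕ) (x : ℕ → G),
      (List.ofFn fun i : Fin k => (η ^ (i : ℕ)) (φ (x i) * a)).prod
        = φ (List.ofFn fun i : Fin k => (θ ^ (i : ℕ)) (x i)).prod * Ak η a k := by
  intro k
  induction k with
  | zero => intro x; simp [Ak_zero]
  | succ k ih =>
    intro x
    have hkey : Ak η a k * (η ^ k) (φ (x k)) = φ ((θ ^ k) (x k)) * Ak η a k := by
      rw [key_conj θ η a φ hφθ]; group
    rw [List.ofFn_succ' (fun i : Fin (k + 1) => (η ^ (i : ℕ)) (φ (x i) * a)),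
        List.ofFn_succ' (fun i : Fin (k + 1) => (θ ^ (i : ℕ)) (x i))]
    simp only [List.concat_eq_append, List.prod_append, List.prod_cons, List.prod_nil,
      Fin.coe_castSucc, Fin.val_last, mul_one]
    rw [ih, Ak_succ']
    simp only [map_mul]
    calc φ (List.ofFn fun i : Fin k => (θ ^ (i : ℕ)) (x i)).prod * Ak η a k *
          ((η ^ k) (φ (x k)) * (η ^ k) a)
        = φ (List.ofFn fun i : Fin k => (θ ^ (i : ℕ)) (x i)).prod *
            (Ak η a k * (η ^ k) (φ (x k))) * (η ^ k) a := by group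
      _ = φ (List.ofFn fun i : Fin k => (θ ^ (i : ℕ)) (x i)).prod *
            (φ ((θ ^ k) (x k)) * Ak η a k) * (η ^ k) a := by rw [hkey]
      _ = _ := by group

/-- conversely, if `a` and a group homomorphism `φ` satisfy the two
compatibility conditions, then `ψ(x) = φ(x) ∗ a` is a homomorphism of the derived
polyadic groups. -/
theorem polyadic_hom_construction {G H : Type*} [Group G] [Group H] (n : ℕ) (hn : 2 ≤ n)
    (θ : MulAut G) (b : G) (hθb : θ b = b)
    (hθn : ∀ x : G, (θ ^ (n - 1)) x = b * x * b⁻¹)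
    (η : MulAut H) (c : H) (hηc : η c = c)
    (hηn : ∀ y : H, (η ^ (n - 1)) y = c * y * c⁻¹)
    (a : H) (φ : G →* H)
    (ha : derOp n η c (fun _ => a) = φ b * a)
    (hφθ : ∀ x : G, φ (θ x) = a * η (φ x) * a⁻¹) :
    ∀ x : Fin n → G,
      φ (derOp n θ b x) * a = derOp n η c (fun i => φ (x i) * a) := by
  intro x
  have hA : Ak η a n * c = φ b * a := by
    rw [← ha, derOp, Ak]
  set x' : ℕ → G := fun m => if h : m < n then x ⟨m, h⟩ else 1 with hx'
  have e1 : (List.ofFn fun i : Fin n => (θ ^ (i : ℕ)) (x i))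
      = List.ofFn fun i : Fin n => (θ ^ (i : ℕ)) (x' i) := by
    congr 1; funext i; simp [hx', i.isLt]
  have e2 : (List.ofFn fun i : Fin n => (η ^ (i : ℕ)) (φ (x i) * a))
      = List.ofFn fun i : Fin n => (η ^ (i : ℕ)) (φ (x' i) * a) := by
    congr 1; funext i; simp [hx', i.isLt]
  simp only [derOp]
  rw [e1, e2, main_prod θ η a φ hφθ n x']
  rw [map_mul]
  calc φ (List.ofFn fun i : Fin n => (θ ^ (i : ℕ)) (x' i)).prod * φ b * a
      = φ (List.ofFn fun i : Fin n => (θ ^ (i : ℕ)) (x' i)).prod * (φ b * a) := by group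
    _ = φ (List.ofFn fun i : Fin n => (θ ^ (i : ℕ)) (x' i)).prod * (Ak η a n * c) := by
        rw [hA]
    _ = _ := by group
end

section
/- (Universal property of Post's cover) Let n ≥ 2 and let (G, f) be an n-ary group. Then there exist a group G* and an injective map ι : G → G* with ι(f(x₁,...,xₙ)) = ι(x₁)·ι(x₂)·…·ι(xₙ) for all x₁,...,xₙ ∈ G, such that for every group H and every map β : G → H satisfying β(f(x₁,...,xₙ)) = β(x₁)·β(x₂)·…·β(xₙ) for all x₁,...,xₙ ∈ G, there exists a unique group homomorphism h : G* → H with h ∘ ι = β. -/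
universe u v

/-- A universal Post cover of an `n`-ary group `(G, f)`: a group `Gs` with an injective
map `ι : G → Gs` turning `f` into the iterated product, which is universal among all
such maps into groups. -/
structure UniversalPostCover (n : ℕ) (G : Type u) (f : (Fin n → G) → G) where
  Gs : Type u
  [grp : Group Gs]
  ι : G → Gs
  inj : Function.Injective ι
  mulForm : ∀ x : Fin n → G, ι (f x) = (List.ofFn fun i : Fin n => ι (x i)).prod
  /-- universal property: every map `β : G → H` into a group satisfying
  `β(f(x₁,…,xₙ)) = β(x₁)⋯β(xₙ)` factors uniquely through `ι`. -/
  univ : ∀ (H : Type v) [Group H] (β : G → H),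
    (∀ x : Fin n → G, β (f x) = (List.ofFn fun i : Fin n => β (x i)).prod) →
    ∃! h : Gs →* H, ∀ g : G, h (ι g) = β g


/-!
The cover `G*` is the group presented by the generators `G` and the relations
`f x = x 0 ⋯ x (n-1)`, so the factorisation through `G*` is that of a presentation. The content
is the injectivity of `G → G*`, which comes from a faithful action of `G*` by permutations.
Its elements of positive degree are represented by the words `w` of length `0 < k < n`, two
words being equal in `G*` when `f (s ++ w)` agrees for every left completion `s`; a letter `g`
acts by prepending `g` and collapsing a word of length `n` with `f`. Associativity makes this
well defined and turns `f x` into the product of the actions of the `x i`; unique solvability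
makes each action bijective and recovers `g` from its action on a word of length `n - 1`.
-/

namespace PostCover

open List

variable {G : Type u} {n : ℕ}

theorem update_getD_append_cons (a c : List G) (x z d : G) (h : a.length < n) :
    Function.update (fun t : Fin n => (a ++ x :: c).getD t d) ⟨a.length, h⟩ z =
      fun t : Fin n => (a ++ z :: c).getD t d := by
  funext t
  rcases eq_or_ne t ⟨a.length, h⟩ with rfl | ht
  · simp
  · rw [Function.update_of_ne ht]
    have ht' : (t : ℕ) ≠ a.length := fun h' => ht (Fin.ext h')
    rcases lt_or_gt_of_ne ht' with hlt | hgt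
    · rw [getD_append _ _ _ _ hlt, getD_append _ _ _ _ hlt]
    · obtain ⟨m, hm⟩ : ∃ m, (t : ℕ) = a.length + 1 + m := ⟨t - a.length - 1, by omega⟩
      rw [hm, getD_append_right _ _ _ _ (by omega), getD_append_right _ _ _ _ (by omega)]
      simp [show a.length + 1 + m - a.length = m + 1 by omega]

section Words

variable [Inhabited G] (f : (Fin n → G) → G)

-- Lists are padded with `default` or truncated to length `n`; all uses are at length `n`.
def eval (l : List G) : G := f fun i => l.getD i default

@[simp] theorem eval_ofFn (x : Fin n → G) : eval f (ofFn x) = f x := by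
  simp [eval]

theorem eval_assoc (hA : PolyAssoc n f) {a b c a' b' c' : List G} (hb : b.length = n)
    (hb' : b'.length = n) (hac : a.length + 1 + c.length = n)
    (hac' : a'.length + 1 + c'.length = n) (h : a ++ b ++ c = a' ++ b' ++ c') :
    eval f (a ++ eval f b :: c) = eval f (a' ++ eval f b' :: c') := by
  -- the right-hand side is the bracketing of `a ++ b ++ c` at position `a.length` in `PolyAssoc`
  have insert_eq : ∀ a b c : List G, b.length = n → a.length + 1 + c.length = n →
      eval f (a ++ eval f b :: c) =
        f (fun t : Fin n =>
          if (t : ℕ) < a.length then (a ++ b ++ c).getD t default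
          else if (t : ℕ) = a.length then
            f (fun s : Fin n => (a ++ b ++ c).getD (a.length + s) default)
          else (a ++ b ++ c).getD (t + n - 1) default) := by
    intro a b c hb hac
    refine congrArg f (funext fun t => ?_)
    split_ifs with h1 h2
    · rw [append_assoc, getD_append _ _ _ _ h1, getD_append _ _ _ _ h1]
    · simp only [h2, getD_append_right _ _ _ _ le_rfl, Nat.sub_self, getD_cons_zero, eval]
      refine congrArg f (funext fun s => ?_)
      rw [append_assoc, getD_append_right _ _ _ _ (by omega),
        getD_append _ _ _ _ (by omega)]
      simp
    · obtain ⟨m, hm⟩ : ∃ m, (t : ℕ) = a.length + 1 + m := ⟨t - a.length - 1, by omega⟩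
      rw [hm, append_assoc, getD_append_right _ _ _ _ (by omega),
        getD_append_right _ _ _ _ (by omega), getD_append_right _ _ _ _ (by omega)]
      simp only [show a.length + 1 + m - a.length = m + 1 by omega, getD_cons_succ]
      congr 1
      omega
  rw [insert_eq a b c hb hac, insert_eq a' b' c' hb' hac', h]
  rcases le_total a.length a'.length with hle | hle
  · exact hA _ _ hle (by omega) fun t => (a' ++ b' ++ c').getD t default
  · exact (hA _ _ hle (by omega) fun t => (a' ++ b' ++ c').getD t default).symm

theorem exists_eval_eq (hS : PolySolv n f) {a c : List G} (hac : a.length + 1 + c.length = n)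
    (y : G) : ∃ z, eval f (a ++ z :: c) = y := by
  obtain ⟨z, hz⟩ :=
    (hS (fun t => (a ++ default :: c).getD t default) y ⟨a.length, by omega⟩).exists
  exact ⟨z, by rwa [update_getD_append_cons] at hz⟩

theorem eq_of_eval_eq (hS : PolySolv n f) {a c : List G} (hac : a.length + 1 + c.length = n)
    {x z : G} (h : eval f (a ++ x :: c) = eval f (a ++ z :: c)) : x = z := by
  refine (hS (fun t => (a ++ default :: c).getD t default) (eval f (a ++ z :: c))
    ⟨a.length, by omega⟩).unique (y₁ := x) (y₂ := z) ?_ ?_ <;> rw [update_getD_append_cons]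
  exacts [h, rfl]

theorem eval_append_eq_of_eval_append_eq (hA : PolyAssoc n f) (hS : PolySolv n f)
    {w w' s₀ s : List G} (hw : w.length = w'.length) (hs₀ : s₀.length + w.length = n)
    (hs : s.length + w.length = n) (h : eval f (s₀ ++ w) = eval f (s₀ ++ w')) :
    eval f (s ++ w) = eval f (s ++ w') := by
  rcases s.eq_nil_or_concat' with rfl | ⟨s', z, rfl⟩
  · obtain rfl : s₀ = [] := eq_nil_of_length_eq_zero (by simp at hs; omega)
    exact h
  obtain rfl | ⟨k, hk⟩ : w = [] ∨ ∃ k, w.length = k + 1 := by cases w <;> simp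
  · rw [eq_nil_of_length_eq_zero hw.symm]
  -- Write the last letter of `s` as a product ending in `s₀`; associativity then
  -- regroups `s ++ v` around the factor `eval f (s₀ ++ v)`.
  obtain ⟨x, hx⟩ := exists_eval_eq f hS (a := []) (c := replicate k default ++ s₀)
    (by simp at hs₀ ⊢; omega) z
  have regroup : ∀ v : List G, v.length = k + 1 →
      eval f (s' ++ [z] ++ v) =
        eval f ((s' ++ x :: replicate k default) ++ eval f (s₀ ++ v) :: []) := by
    intro v hv
    rw [append_assoc, singleton_append, ← hx]
    apply eval_assoc f hA <;> simp at hs hs₀ ⊢ <;> omega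
  rw [regroup w hk, regroup w' (hw ▸ hk), h]

-- Comparing words after the single completion `default ⋯ default` is as good as comparing
-- them after every completion, by `eval_append_eq_of_wordKey_eq`.
def wordKey (w : List G) : ℕ × G := (w.length, eval f (replicate (n - w.length) default ++ w))

theorem wordKey_eq_of_eval_append_eq (hA : PolyAssoc n f) (hS : PolySolv n f)
    {w w' s₀ : List G} (hw : w.length = w'.length) (hs₀ : s₀.length + w.length = n)
    (h : eval f (s₀ ++ w) = eval f (s₀ ++ w')) : wordKey f w = wordKey f w' := by
  refine Prod.ext hw ?_
  simp only [wordKey, ← hw]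
  exact eval_append_eq_of_eval_append_eq f hA hS hw hs₀ (by simp; omega) h

theorem eval_append_eq_of_wordKey_eq (hA : PolyAssoc n f) (hS : PolySolv n f)
    {w w' s : List G} (hw : w.length ≤ n) (h : wordKey f w = wordKey f w')
    (hs : s.length + w.length = n) : eval f (s ++ w) = eval f (s ++ w') := by
  simp only [wordKey, Prod.mk.injEq] at h
  exact eval_append_eq_of_eval_append_eq f hA hS h.1 (by simp; omega) hs (h.1 ▸ h.2)

def push (g : G) (w : List G) : List G :=
  if w.length + 1 < n then g :: w else [eval f (g :: w)]

variable {f} in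
theorem push_of_lt {g : G} {w : List G} (h : w.length + 1 < n) : push f g w = g :: w := if_pos h

variable {f} in
theorem push_of_not_lt {g : G} {w : List G} (h : ¬ w.length + 1 < n) :
    push f g w = [eval f (g :: w)] := if_neg h

theorem length_push_mem_Ioo (hn : 2 ≤ n) (g : G) (w : List G) :
    (push f g w).length ∈ Set.Ioo 0 n := by
  unfold push
  split_ifs with h <;> simp <;> omega

theorem wordKey_push_eq (hA : PolyAssoc n f) (hS : PolySolv n f) (g : G) {u v : List G}
    (hu : u.length < n) (h : wordKey f u = wordKey f v) :
    wordKey f (push f g u) = wordKey f (push f g v) := by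
  have hlen : u.length = v.length := congrArg Prod.fst h
  by_cases hlt : u.length + 1 < n
  · rw [push_of_lt hlt, push_of_lt (hlen ▸ hlt)]
    refine wordKey_eq_of_eval_append_eq f hA hS (s₀ := replicate (n - (u.length + 1)) default)
      (by simp [hlen]) (by simp; omega) ?_
    have hg := eval_append_eq_of_wordKey_eq f hA hS hu.le h
      (s := replicate (n - (u.length + 1)) default ++ [g]) (by simp; omega)
    rwa [append_assoc, append_assoc, singleton_append, singleton_append] at hg
  · rw [push_of_not_lt hlt, push_of_not_lt (hlen ▸ hlt)]
    have hg := eval_append_eq_of_wordKey_eq f hA hS hu.le h (s := [g]) (by simp; omega)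
    rw [singleton_append, singleton_append] at hg
    rw [hg]

theorem wordKey_eq_of_wordKey_push_eq (hA : PolyAssoc n f) (hS : PolySolv n f) (g : G)
    {u v : List G} (hu : u.length ∈ Set.Ioo 0 n) (hv : v.length ∈ Set.Ioo 0 n)
    (h : wordKey f (push f g u) = wordKey f (push f g v)) : wordKey f u = wordKey f v := by
  simp only [Set.mem_Ioo] at hu hv
  have hlen : u.length = v.length := by
    have hlen := congrArg Prod.fst h
    unfold wordKey push at hlen
    split_ifs at hlen <;> simp only [length_cons, length_nil] at hlen <;> omega
  by_cases hlt : u.length + 1 < n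
  · rw [push_of_lt hlt, push_of_lt (hlen ▸ hlt)] at h
    simp only [wordKey, length_cons, hlen, Prod.mk.injEq, true_and] at h
    refine wordKey_eq_of_eval_append_eq f hA hS hlen (s₀ := replicate (n - u.length) default)
      (by simp; omega) (eval_append_eq_of_eval_append_eq f hA hS hlen
        (s₀ := replicate (n - (u.length + 1)) default ++ [g])
        (s := replicate (n - u.length) default) (by simp; omega) (by simp; omega) ?_)
    simpa [hlen] using h
  · rw [push_of_not_lt hlt, push_of_not_lt (hlen ▸ hlt)] at h
    simp only [wordKey, length_singleton, Prod.mk.injEq, true_and] at h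
    have hg := eq_of_eval_eq f hS (c := []) (by simp; omega) h
    exact wordKey_eq_of_eval_append_eq f hA hS (s₀ := [g]) hlen (by simp; omega) hg

theorem exists_wordKey_push_eq (hn : 2 ≤ n) (hS : PolySolv n f) (g : G) {v : List G}
    (hv : v.length ∈ Set.Ioo 0 n) :
    ∃ u : List G, u.length ∈ Set.Ioo 0 n ∧ wordKey f (push f g u) = wordKey f v := by
  simp only [Set.mem_Ioo] at hv
  obtain ⟨k, hk⟩ | ⟨y, rfl⟩ : (∃ k, v.length = k + 2) ∨ ∃ y, v = [y] := by
    rcases v with _ | ⟨y, _ | ⟨y', v⟩⟩ <;> simp_all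
  · obtain ⟨z, hz⟩ := exists_eval_eq f hS (a := replicate (n - (k + 2)) default ++ [g])
      (c := replicate k default) (by simp; omega) (eval f (replicate (n - (k + 2)) default ++ v))
    refine ⟨z :: replicate k default, by simp; omega, ?_⟩
    rw [push_of_lt (by simp; omega)]
    simpa [wordKey, hk] using hz
  · obtain ⟨z, hz⟩ := exists_eval_eq f hS (a := [g]) (c := replicate (n - 2) default)
      (by simp; omega) y
    refine ⟨z :: replicate (n - 2) default, by simp; omega, ?_⟩
    rw [singleton_append] at hz
    rw [push_of_not_lt (by simp; omega), hz]

theorem foldr_push_of_lt {l w : List G} (h : l.length + w.length < n) :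
    l.foldr (push f) w = l ++ w := by
  induction l with
  | nil => rfl
  | cons a l ih =>
    simp only [length_cons] at h
    rw [foldr_cons, ih (by omega), push_of_lt (by simp; omega), cons_append]

theorem foldr_push_of_eq {l w : List G} (hl : l ≠ []) (h : l.length + w.length = n) :
    l.foldr (push f) w = [eval f (l ++ w)] := by
  obtain ⟨a, l, rfl⟩ := exists_cons_of_ne_nil hl
  simp only [length_cons] at h
  rw [foldr_cons, foldr_push_of_lt f (by omega), push_of_not_lt (by simp; omega), cons_append]

theorem wordKey_foldr_push (hA : PolyAssoc n f) (hS : PolySolv n f) {l w : List G}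
    (hl : l.length = n) (hw : w.length ∈ Set.Ioo 0 n) :
    wordKey f (l.foldr (push f) w) = wordKey f (push f (eval f l) w) := by
  simp only [Set.mem_Ioo] at hw
  have reduce : l.foldr (push f) w =
      (l.take w.length).foldr (push f) [eval f (l.drop w.length ++ w)] := by
    conv_lhs => rw [← take_append_drop w.length l]
    rw [foldr_append,
      foldr_push_of_eq f (l := l.drop w.length) (by simp; omega) (by simp; omega)]
  have regroup : ∀ a : List G, a.length + w.length + 1 = n →
      eval f (a ++ l.take w.length ++ [eval f (l.drop w.length ++ w)]) =
        eval f (a ++ eval f l :: w) := fun a ha =>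
    eval_assoc f hA (by simp; omega) hl (by simp; omega) (by omega)
      (by simp only [append_nil, append_assoc, take_append_drop, ← append_assoc (take _ _)])
  rw [reduce]
  by_cases hlt : w.length + 1 < n
  · rw [foldr_push_of_lt f (by simp; omega), push_of_lt hlt]
    refine wordKey_eq_of_eval_append_eq f hA hS (s₀ := replicate (n - (w.length + 1)) default)
      (by simp [hl]; omega) (by simp; omega) ?_
    rw [← append_assoc, regroup _ (by simp; omega)]
  · rw [foldr_push_of_eq f (ne_nil_of_length_pos (by simp [hl]; omega)) (by simp [hl]; omega),
      push_of_not_lt hlt]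
    simpa using congrArg (fun x => wordKey f [x]) (regroup [] (by simp; omega))

end Words

section Representation

def Word (n : ℕ) (G : Type u) : Type u := {w : List G // w.length ∈ Set.Ioo 0 n}

variable [Inhabited G] (f : (Fin n → G) → G) (hn : 2 ≤ n) (hA : PolyAssoc n f)
  (hS : PolySolv n f)

def wordSetoid : Setoid (Word n G) := Setoid.ker fun w => wordKey f w.1

def pushWord (g : G) (w : Word n G) : Word n G := ⟨push f g w.1, length_push_mem_Ioo f hn g w.1⟩

theorem val_foldr_pushWord (l : List G) (w : Word n G) :
    (l.foldr (pushWord f hn) w).1 = l.foldr (push f) w.1 := by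
  induction l with
  | nil => rfl
  | cons a l ih => rw [foldr_cons, foldr_cons, ← ih]; rfl

noncomputable def prependPerm (g : G) : Equiv.Perm (Quotient (wordSetoid f)) :=
  Equiv.ofBijective
    (Quotient.map (pushWord f hn g) fun u _ h => wordKey_push_eq f hA hS g u.2.2 h)
    ⟨fun q q' => Quotient.inductionOn₂ q q' fun u v h =>
      Quotient.sound (wordKey_eq_of_wordKey_push_eq f hA hS g u.2 v.2 (Quotient.exact h)),
    fun q => Quotient.inductionOn q fun v => by
      obtain ⟨u, hu, h⟩ := exists_wordKey_push_eq f hn hS g v.2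
      exact ⟨⟦⟨u, hu⟩⟧, Quotient.sound h⟩⟩

theorem prependPerm_mk (g : G) (w : Word n G) :
    prependPerm f hn hA hS g ⟦w⟧ = ⟦pushWord f hn g w⟧ := rfl

theorem list_prod_map_prependPerm_mk (l : List G) (w : Word n G) :
    (l.map (prependPerm f hn hA hS)).prod ⟦w⟧ = ⟦l.foldr (pushWord f hn) w⟧ := by
  induction l with
  | nil => rfl
  | cons a l ih => rw [map_cons, prod_cons, Equiv.Perm.mul_apply, ih, foldr_cons]; rfl

theorem prependPerm_f_eq_prod (x : Fin n → G) :
    prependPerm f hn hA hS (f x) = (List.ofFn fun i => prependPerm f hn hA hS (x i)).prod := by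
  refine Equiv.ext fun q => Quotient.inductionOn q fun w => ?_
  rw [show (ofFn fun i => prependPerm f hn hA hS (x i)) = (ofFn x).map (prependPerm f hn hA hS)
    by simp [map_ofFn, Function.comp_def], list_prod_map_prependPerm_mk, prependPerm_mk]
  refine Quotient.sound ?_
  show wordKey f (pushWord f hn (f x) w).1 = wordKey f (foldr (pushWord f hn) w (ofFn x)).1
  rw [val_foldr_pushWord, wordKey_foldr_push f hA hS length_ofFn w.2, eval_ofFn]
  rfl

theorem prependPerm_injective : Function.Injective (prependPerm f hn hA hS) := by
  intro g g' h
  have hlen : (replicate (n - 1) (default : G)).length = n - 1 := length_replicate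
  have hd := Quotient.exact
    (congrArg (· ⟦(⟨replicate (n - 1) default, by simp; omega⟩ : Word n G)⟧) h)
  change wordKey f (push f g (replicate (n - 1) default)) =
    wordKey f (push f g' (replicate (n - 1) default)) at hd
  rw [push_of_not_lt (by omega), push_of_not_lt (by omega)] at hd
  simp only [wordKey, length_singleton, Prod.mk.injEq, true_and] at hd
  exact eq_of_eval_eq f hS (a := []) (by simp; omega)
    (eq_of_eval_eq f hS (c := []) (by simp; omega) hd)

end Representation

section Presentation

variable (f : (Fin n → G) → G)

def relators : Set (FreeGroup G) :=
  Set.range fun x : Fin n → G =>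
    (FreeGroup.of (f x))⁻¹ * (List.ofFn fun i => FreeGroup.of (x i)).prod

variable {f} in
theorem lift_eq_one_of_mem_relators {H : Type v} [Group H] {β : G → H}
    (hβ : ∀ x : Fin n → G, β (f x) = (List.ofFn fun i : Fin n => β (x i)).prod) :
    ∀ r ∈ relators f, FreeGroup.lift β r = 1 := by
  rintro _ ⟨x, rfl⟩
  simp [hβ, map_list_prod, Function.comp_def]

theorem of_f_eq_prod (x : Fin n → G) :
    (PresentedGroup.of (f x) : PresentedGroup (relators f)) =
      (List.ofFn fun i => PresentedGroup.of (x i)).prod := by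
  have h := PresentedGroup.one_of_mem (rels := relators f) ⟨x, rfl⟩
  rw [map_mul, map_inv, inv_mul_eq_one, map_list_prod, map_ofFn] at h
  exact h

theorem of_injective_of_injective {H : Type v} [Group H] {β : G → H}
    (hβ : ∀ x : Fin n → G, β (f x) = (List.ofFn fun i : Fin n => β (x i)).prod)
    (hinj : Function.Injective β) :
    Function.Injective (PresentedGroup.of : G → PresentedGroup (relators f)) := by
  refine Function.Injective.of_comp
    (f := PresentedGroup.toGroup (lift_eq_one_of_mem_relators hβ)) ?_
  simpa [Function.comp_def] using hinj

end Presentation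

end PostCover

open PostCover in
theorem post_cover_universal_property_general {G : Type u} (n : ℕ) (hn : 2 ≤ n)
    (f : (Fin n → G) → G) (hf : IsPolyadicGroup n f) :
    Nonempty (UniversalPostCover.{u, v} n G f) := by
  obtain ⟨hA, hS⟩ := hf
  have hinj : Function.Injective (PresentedGroup.of : G → PresentedGroup (relators f)) := by
    cases isEmpty_or_nonempty G
    · exact Function.injective_of_subsingleton _
    · inhabit G
      exact of_injective_of_injective f (prependPerm_f_eq_prod f hn hA hS)
        (prependPerm_injective f hn hA hS)
  refine ⟨⟨PresentedGroup (relators f), PresentedGroup.of, hinj, of_f_eq_prod f,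
    fun H _ β hβ => ?_⟩⟩
  have hrel := lift_eq_one_of_mem_relators hβ
  exact ⟨PresentedGroup.toGroup hrel, fun g => PresentedGroup.toGroup.of hrel,
    fun φ hφ => MonoidHom.ext fun _ => PresentedGroup.toGroup.unique hrel φ hφ⟩

/-- universal property of Post's cover: every `n`-ary group admits a
universal Post cover. -/
theorem post_cover_universal_property {G : Type u} [Nonempty G] (n : ℕ) (hn : 2 ≤ n)
    (f : (Fin n → G) → G) (hf : IsPolyadicGroup n f) :
    Nonempty (UniversalPostCover.{u, v} n G f) :=
  post_cover_universal_property_general n hn f hf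
end

section
/- Let n ≥ 2, let (G, ·) be a group with automorphism θ and b ∈ G satisfying θ(b) = b and θ^{n-1}(x) = b·x·b⁻¹ for all x, and let f be the derived n-ary operation f(x₁,...,xₙ) = x₁·θ(x₂)·…·θ^{n-1}(xₙ)·b. Let R ⊆ G × G be a congruence of the n-ary group (G, f) which is also a normal subgroup of the direct product group G × G. Then the map ψ : G/R → (G×G)/R defined by ψ([x]_R) = (x, 1)R is well-defined and injective, and for all x₁,...,xₙ ∈ G it satisfies ψ([f(x₁,...,xₙ)]_R) = (x₁,1)·(θ(x₂),1)·…·(θ^{n-1}(xₙ),1)·(b,1)·R in the quotient group (G×G)/R. -/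
/-! Since `R` is reflexive, symmetric and closed under products, the identity
`(x, x) * (x⁻¹ * y, 1) = (y, x)` shows that `(x, y) ∈ R` iff `(x⁻¹ * y, 1) ∈ R`, i.e. iff
`(x, 1)` and `(y, 1)` lie in the same left coset of `R`. This makes `[x] ↦ (x, 1)R` well defined
and injective; the formula for `[f(x₁,…,xₙ)]` is the multiplicativity of `x ↦ (x, 1)`. -/

theorem List.prod_ofFn_mk_one {M N : Type*} [Monoid M] [Monoid N] {n : ℕ} (a : Fin n → M) :
    (List.ofFn fun i => (a i, (1 : N))).prod = ((List.ofFn a).prod, 1) := by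
  simpa [List.map_ofFn, Function.comp_def] using
    (map_list_prod (MonoidHom.inl M N) (List.ofFn a)).symm

namespace Subgroup

variable {G : Type*} [Group G] {R : Subgroup (G × G)}
  (hR : Equivalence fun x y : G => (x, y) ∈ R)
include hR

theorem inv_mul_mk_one_mem_iff {x y : G} : (x⁻¹ * y, (1 : G)) ∈ R ↔ (x, y) ∈ R := by
  have hxx : ((x, x) : G × G) ∈ R := hR.refl x
  constructor
  · intro h
    refine hR.symm ?_
    simpa using mul_mem hxx h
  · intro h
    simpa using mul_mem (inv_mem hxx) (hR.symm h)

theorem quotientMk_mk_one_eq_iff {x y : G} :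
    (QuotientGroup.mk (x, 1) : (G × G) ⧸ R) = QuotientGroup.mk (y, 1) ↔ (x, y) ∈ R := by
  rw [QuotientGroup.eq, Prod.inv_mk, Prod.mk_mul_mk, inv_one, one_mul, inv_mul_mk_one_mem_iff hR]

def inlQuotient : Quotient ⟨fun x y : G => (x, y) ∈ R, hR⟩ → (G × G) ⧸ R :=
  Quotient.lift (fun x => QuotientGroup.mk (x, 1)) fun _ _ h =>
    (quotientMk_mk_one_eq_iff hR).2 h

theorem inlQuotient_injective : Function.Injective (inlQuotient hR) := by
  rintro ⟨x⟩ ⟨y⟩ h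
  exact Quotient.sound ((quotientMk_mk_one_eq_iff hR).1 h)

end Subgroup

theorem congruence_quotient_embedding_general {G : Type*} [Group G] (n : ℕ)
    (θ : MulAut G) (b : G)
    (R : Subgroup (G × G))
    (hEquiv : Equivalence (fun x y : G => (x, y) ∈ R)) :
    ∀ s : Setoid G, s = ⟨fun x y => (x, y) ∈ R, hEquiv⟩ →
      ∃ ψ : Quotient s → (G × G) ⧸ R,
        Function.Injective ψ ∧
        (∀ x : G, ψ (Quotient.mk s x) = QuotientGroup.mk (x, 1)) ∧
        (∀ x : Fin n → G,
          ψ (Quotient.mk s (derOp n θ b x)) =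
            QuotientGroup.mk
              ((List.ofFn fun i : Fin n => ((θ ^ (i : ℕ)) (x i), (1 : G))).prod *
                (b, 1))) := by
  rintro s rfl
  refine ⟨Subgroup.inlQuotient hEquiv, Subgroup.inlQuotient_injective hEquiv,
    fun x => rfl, fun x => ?_⟩
  show QuotientGroup.mk (derOp n θ b x, 1) = _
  rw [List.prod_ofFn_mk_one, Prod.mk_mul_mk, one_mul]
  rfl

/-- if `R` is a congruence of the derived `n`-ary group `(G, f)` which is
also a normal subgroup of the direct product `G × G`, then `ψ([x]_R) = (x,1)R` is a
well-defined injective map `G/R → (G×G)/R` sending `[f(x₁,…,xₙ)]_R` to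
`(x₁,1)(θ(x₂),1)⋯(θ^{n-1}(xₙ),1)(b,1)R`. -/
theorem congruence_quotient_embedding {G : Type*} [Group G] (n : ℕ) (hn : 2 ≤ n)
    (θ : MulAut G) (b : G) (hθb : θ b = b)
    (hθn : ∀ x : G, (θ ^ (n - 1)) x = b * x * b⁻¹)
    (R : Subgroup (G × G)) [R.Normal]
    (hEquiv : Equivalence (fun x y : G => (x, y) ∈ R))
    (hcong : ∀ x y : Fin n → G, (∀ t, (x t, y t) ∈ R) →
      (derOp n θ b x, derOp n θ b y) ∈ R) :
    ∀ s : Setoid G, s = ⟨fun x y => (x, y) ∈ R, hEquiv⟩ →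
      ∃ ψ : Quotient s → (G × G) ⧸ R,
        Function.Injective ψ ∧
        (∀ x : G, ψ (Quotient.mk s x) = QuotientGroup.mk (x, 1)) ∧
        (∀ x : Fin n → G,
          ψ (Quotient.mk s (derOp n θ b x)) =
            QuotientGroup.mk
              ((List.ofFn fun i : Fin n => ((θ ^ (i : ℕ)) (x i), (1 : G))).prod *
                (b, 1))) :=
  congruence_quotient_embedding_general n θ b R hEquiv
end

section
/- Let n ≥ 2 and let (G, f) be an n-ary group. Then (G, f) is derived from a group, i.e., there exists a group operation ∗ on G with f(x₁,...,xₙ) = x₁ ∗ x₂ ∗ … ∗ xₙ for all x₁,...,xₙ ∈ G, if and only if G contains an n-ary identity: an element a ∈ G such that f(a,...,a, x, a,...,a) = x for all x ∈ G and every position 1 ≤ i ≤ n of x (with i−1 copies of a before x and n−i copies after). -/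
section Bwd
variable {G : Type*} {n : ℕ} {f : (Fin n → G) → G} {a : G}

/-- binary retract -/
def pm (f : (Fin n → G) → G) (a : G) (x y : G) : G :=
  f (fun t => if (t : ℕ) = 0 then x else if (t : ℕ) = 1 then y else a)

variable (hn : 2 ≤ n)
  (ha : ∀ (x : G) (i : Fin n), f (Function.update (fun _ => a) i x) = x)

include hn ha

lemma id_pos : ∀ (x : G) (k : ℕ), k < n →
    f (fun t => if (t : ℕ) = k then x else a) = x := by
  intro x k hk
  have h : (fun t : Fin n => if (t : ℕ) = k then x else a)
      = Function.update (fun _ => a) ⟨k, hk⟩ x := by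
    funext t
    rw [Function.update_apply]
    simp [Fin.ext_iff]
  rw [h]
  exact ha x ⟨k, hk⟩

lemma pm_left : ∀ x : G, pm f a a x = x := by
  intro x
  unfold pm
  have h1 : (fun t : Fin n => if (t:ℕ) = 0 then a else if (t:ℕ) = 1 then x else a)
      = fun t : Fin n => if (t:ℕ) = 1 then x else a := by
    funext t; split_ifs with h1 h2 <;> first | rfl | omega
  rw [h1]; exact id_pos hn ha x 1 (by omega)

lemma pm_right : ∀ x : G, pm f a x a = x := by
  intro x
  unfold pm
  have h1 : (fun t : Fin n => if (t:ℕ) = 0 then x else if (t:ℕ) = 1 then a else a)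
      = fun t : Fin n => if (t:ℕ) = 0 then x else a := by
    funext t; split_ifs with h1 h2 <;> first | rfl | omega
  rw [h1]; exact id_pos hn ha x 0 (by omega)

end Bwd

section Bwd2
variable {G : Type*} {n : ℕ} {f : (Fin n → G) → G} {a : G}
variable (hn : 2 ≤ n)
  (ha : ∀ (x : G) (i : Fin n), f (Function.update (fun _ => a) i x) = x)
include hn ha

lemma lemB (hA : PolyAssoc n f) (y z : G) :
    f (fun t : Fin n => if (t:ℕ) = 0 then y else if (t:ℕ) = n-1 then z else a)
      = pm f a y z := by
  have key := hA 0 (n-1) (by omega) (by omega)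
    (fun m => if m = 0 then y else if m = n then z else a)
  have h1 : (fun s : Fin n => if 0 + (s:ℕ) = 0 then y else if 0 + (s:ℕ) = n then z else a)
      = (fun t : Fin n => if (t:ℕ) = 0 then y else a) := by
    funext s; have hs := s.isLt; split_ifs <;> first | rfl | omega
  rw [h1, id_pos hn ha y 0 (by omega)] at key
  have h2 : (fun t : Fin n => if (t:ℕ) < 0 then (if (t:ℕ) = 0 then y else if (t:ℕ) = n then z else a)
        else if (t:ℕ) = 0 then y
        else if (t:ℕ) + n - 1 = 0 then y else if (t:ℕ) + n - 1 = n then z else a)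
      = (fun t : Fin n => if (t:ℕ) = 0 then y else if (t:ℕ) = 1 then z else a) := by
    funext t; have ht := t.isLt; split_ifs <;> first | rfl | omega
  rw [h2] at key
  have h3 : (fun s : Fin n => if n - 1 + (s:ℕ) = 0 then y else if n - 1 + (s:ℕ) = n then z else a)
      = (fun t : Fin n => if (t:ℕ) = 1 then z else a) := by
    funext s; have hs := s.isLt; split_ifs <;> first | rfl | omega
  rw [h3, id_pos hn ha z 1 (by omega)] at key
  have h4 : (fun t : Fin n => if (t:ℕ) < n-1 then (if (t:ℕ) = 0 then y else if (t:ℕ) = n then z else a)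
        else if (t:ℕ) = n-1 then z
        else if (t:ℕ) + n - 1 = 0 then y else if (t:ℕ) + n - 1 = n then z else a)
      = (fun t : Fin n => if (t:ℕ) = 0 then y else if (t:ℕ) = n-1 then z else a) := by
    funext t; have ht := t.isLt; split_ifs <;> first | rfl | omega
  rw [h4] at key
  exact key.symm

lemma passoc (hA : PolyAssoc n f) (x y z : G) :
    pm f a (pm f a x y) z = pm f a x (pm f a y z) := by
  have key := hA 0 1 (by omega) (by omega)
    (fun m => if m = 0 then x else if m = 1 then y else if m = n then z else a)
  have h1 : (fun s : Fin n => if 0 + (s:ℕ) = 0 then x else if 0 + (s:ℕ) = 1 then y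
        else if 0 + (s:ℕ) = n then z else a)
      = (fun t : Fin n => if (t:ℕ) = 0 then x else if (t:ℕ) = 1 then y else a) := by
    funext s; have hs := s.isLt; split_ifs <;> first | rfl | omega
  rw [h1] at key
  have h2 : (fun t : Fin n => if (t:ℕ) < 0 then (if (t:ℕ) = 0 then x else if (t:ℕ) = 1 then y else if (t:ℕ) = n then z else a)
        else if (t:ℕ) = 0 then f (fun t : Fin n => if (t:ℕ) = 0 then x else if (t:ℕ) = 1 then y else a)
        else if (t:ℕ) + n - 1 = 0 then x else if (t:ℕ) + n - 1 = 1 then y else if (t:ℕ) + n - 1 = n then z else a)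
      = (fun t : Fin n => if (t:ℕ) = 0 then pm f a x y else if (t:ℕ) = 1 then z else a) := by
    funext t; have ht := t.isLt; unfold pm; split_ifs <;> first | rfl | omega
  rw [h2] at key
  have h3 : (fun s : Fin n => if 1 + (s:ℕ) = 0 then x else if 1 + (s:ℕ) = 1 then y
        else if 1 + (s:ℕ) = n then z else a)
      = (fun t : Fin n => if (t:ℕ) = 0 then y else if (t:ℕ) = n-1 then z else a) := by
    funext s; have hs := s.isLt; split_ifs <;> first | rfl | omega
  rw [h3, lemB hn ha hA y z] at key
  have h4 : (fun t : Fin n => if (t:ℕ) < 1 then (if (t:ℕ) = 0 then x else if (t:ℕ) = 1 then y else if (t:ℕ) = n then z else a)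
        else if (t:ℕ) = 1 then pm f a y z
        else if (t:ℕ) + n - 1 = 0 then x else if (t:ℕ) + n - 1 = 1 then y else if (t:ℕ) + n - 1 = n then z else a)
      = (fun t : Fin n => if (t:ℕ) = 0 then x else if (t:ℕ) = 1 then pm f a y z else a) := by
    funext t; have ht := t.isLt; split_ifs <;> first | rfl | omega
  rw [h4] at key
  exact key
end Bwd2

section Bwd3
variable {G : Type*} {n : ℕ} {f : (Fin n → G) → G} {a : G}
variable (hn : 2 ≤ n)
  (ha : ∀ (x : G) (i : Fin n), f (Function.update (fun _ => a) i x) = x)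
include hn ha

lemma pshift (hA : PolyAssoc n f) (z : Fin n → G) :
    f z = pm f a (z ⟨0, by omega⟩)
      (f (fun i : Fin n => if h : (i:ℕ)+1 < n then z ⟨(i:ℕ)+1, h⟩ else a)) := by
  have key := hA 1 (n-1) (by omega) (by omega)
    (fun m => if h : m < n then z ⟨m, h⟩ else a)
  have h1 : (fun s : Fin n => if h : 1 + (s:ℕ) < n then z ⟨1 + (s:ℕ), h⟩ else a)
      = (fun i : Fin n => if h : (i:ℕ)+1 < n then z ⟨(i:ℕ)+1, h⟩ else a) := by
    funext s; have hs := s.isLt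
    split_ifs <;> first | rfl | omega | exact congrArg z (by ext; simp; omega)
  rw [h1] at key
  have h2 : (fun t : Fin n => if (t:ℕ) < 1 then (if h : (t:ℕ) < n then z ⟨(t:ℕ), h⟩ else a)
        else if (t:ℕ) = 1 then f (fun i : Fin n => if h : (i:ℕ)+1 < n then z ⟨(i:ℕ)+1, h⟩ else a)
        else if h : (t:ℕ) + n - 1 < n then z ⟨(t:ℕ) + n - 1, h⟩ else a)
      = (fun t : Fin n => if (t:ℕ) = 0 then z ⟨0, by omega⟩
        else if (t:ℕ) = 1 then f (fun i : Fin n => if h : (i:ℕ)+1 < n then z ⟨(i:ℕ)+1, h⟩ else a)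
        else a) := by
    funext t; have ht := t.isLt
    split_ifs <;> first | rfl | omega | exact congrArg z (by ext; simp; omega)
  rw [h2] at key
  have h3 : (fun s : Fin n => if h : n - 1 + (s:ℕ) < n then z ⟨n - 1 + (s:ℕ), h⟩ else a)
      = (fun s : Fin n => if (s:ℕ) = 0 then z ⟨n-1, by omega⟩ else a) := by
    funext s; have hs := s.isLt
    split_ifs <;> first | rfl | omega | exact congrArg z (by ext; simp; omega)
  rw [h3, id_pos hn ha (z ⟨n-1, by omega⟩) 0 (by omega)] at key
  have h4 : (fun t : Fin n => if (t:ℕ) < n - 1 then (if h : (t:ℕ) < n then z ⟨(t:ℕ), h⟩ else a)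
        else if (t:ℕ) = n - 1 then z ⟨n-1, by omega⟩
        else if h : (t:ℕ) + n - 1 < n then z ⟨(t:ℕ) + n - 1, h⟩ else a)
      = z := by
    funext t; have ht := t.isLt
    split_ifs <;> first | rfl | omega | exact congrArg z (by ext; simp; omega)
  rw [h4] at key
  exact key.symm
end Bwd3

section Bwd4
variable {G : Type*} {n : ℕ} {f : (Fin n → G) → G} {a : G}
variable (hn : 2 ≤ n)
  (ha : ∀ (x : G) (i : Fin n), f (Function.update (fun _ => a) i x) = x)
include hn ha

lemma main_foldr (hA : PolyAssoc n f) :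
    ∀ k, k ≤ n → ∀ z : Fin n → G, (∀ i : Fin n, k ≤ (i:ℕ) → z i = a) →
      f z = ((List.ofFn z).take k).foldr (pm f a) a := by
  intro k
  induction k with
  | zero =>
    intro _ z hz
    have h : z = fun t : Fin n => if (t:ℕ) = 0 then a else a := by
      funext t; rw [hz t (Nat.zero_le _)]; split_ifs <;> rfl
    rw [h, id_pos hn ha a 0 (by omega)]
    simp
  | succ k ih =>
    intro hk z hz
    rw [pshift hn ha hA z]
    set z' : Fin n → G := fun i : Fin n => if h : (i:ℕ)+1 < n then z ⟨(i:ℕ)+1, h⟩ else a with hz'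
    have hz'a : ∀ i : Fin n, k ≤ (i:ℕ) → z' i = a := by
      intro i hi
      simp only [hz']
      split
      · exact hz _ (by simpa using Nat.succ_le_succ hi)
      · rfl
    rw [ih (by omega) z' hz'a]
    have hlist : (List.ofFn z).take (k+1) = z ⟨0, by omega⟩ :: (List.ofFn z').take k := by
      apply List.ext_getElem
      · simp; omega
      · intro i h1 h2
        match i with
        | 0 => simp [List.getElem_take, List.getElem_ofFn]
        | (i+1) =>
          simp only [List.getElem_take, List.getElem_ofFn, List.getElem_cons_succ, hz']
          rw [dif_pos (by simp at h1 ⊢; omega)]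
    rw [hlist, List.foldr_cons]
end Bwd4

section Fwd
variable {G : Type*} (mul : G → G → G) (e : G)

lemma foldr_all_e (hl : ∀ x : G, mul e x = x) :
    ∀ l : List G, (∀ y ∈ l, y = e) → l.foldr mul e = e := by
  intro l hy
  induction l with
  | nil => rfl
  | cons b t ih =>
    have hb : b = e := hy b (by simp)
    simp [List.foldr_cons, hb, hl, ih (fun y hy' => hy y (by simp [hy']))]

lemma foldr_update (hl : ∀ x : G, mul e x = x) (hr : ∀ x : G, mul x e = x) :
    ∀ (m : ℕ) (i : Fin m) (x : G),
      (List.ofFn (Function.update (fun _ => e) i x)).foldr mul e = x := by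
  intro m
  induction m with
  | zero => exact fun i => i.elim0
  | succ m ih =>
    intro i x
    rw [List.ofFn_succ]
    refine Fin.cases ?_ ?_ i
    · rw [List.foldr_cons]
      rw [Function.update_self]
      have : ∀ y ∈ List.ofFn (fun j : Fin m =>
          Function.update (fun _ => e) (0 : Fin (m+1)) x j.succ), y = e := by
        intro y hy
        simp only [List.mem_ofFn] at hy
        obtain ⟨j, rfl⟩ := hy
        exact Function.update_of_ne (Fin.succ_ne_zero j) _ _
      rw [foldr_all_e mul e hl _ this, hr]
    · intro j
      rw [List.foldr_cons]
      rw [Function.update_of_ne (Fin.succ_ne_zero j).symm]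
      have : (fun t : Fin m => Function.update (fun _ => e) (Fin.succ j) x t.succ)
          = Function.update (fun _ => e) j x := by
        funext t
        by_cases h : t = j
        · subst h; simp
        · rw [Function.update_of_ne h, Function.update_of_ne (fun hc => h (Fin.succ_injective _ hc))]
      rw [this, ih j x, hl]
end Fwd

/-- an `n`-ary group is derived from a group (i.e. `f` is the iterated
product of some group structure on `G`) if and only if it contains an `n`-ary identity. -/
theorem derived_iff_has_nary_identity {G : Type*} (n : ℕ) (hn : 2 ≤ n)
    (f : (Fin n → G) → G) (hf : IsPolyadicGroup n f) :
    (∃ (mul : G → G → G) (e : G) (inv : G → G),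
      (∀ x y z : G, mul (mul x y) z = mul x (mul y z)) ∧
      (∀ x : G, mul e x = x) ∧ (∀ x : G, mul x e = x) ∧
      (∀ x : G, mul (inv x) x = e) ∧ (∀ x : G, mul x (inv x) = e) ∧
      (∀ x : Fin n → G, f x = (List.ofFn x).foldr mul e)) ↔
    ∃ a : G, ∀ (x : G) (i : Fin n), f (Function.update (fun _ => a) i x) = x := by
  obtain ⟨hA, hS⟩ := hf
  constructor
  · rintro ⟨mul, e, inv, hasc, hel, her, _, _, hfold⟩
    refine ⟨e, fun x i => ?_⟩
    rw [hfold]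
    exact foldr_update mul e hel her n i x
  · rintro ⟨a, ha⟩
    -- right inverses exist
    have hrinv : ∀ x : G, ∃ w : G, pm f a x w = a := by
      intro x
      obtain ⟨w, hw, -⟩ := hS (fun t : Fin n => if (t:ℕ) = 0 then x else a) a ⟨1, by omega⟩
      refine ⟨w, ?_⟩
      have heq : Function.update (fun t : Fin n => if (t:ℕ) = 0 then x else a)
          ⟨1, by omega⟩ w
          = fun t : Fin n => if (t:ℕ) = 0 then x else if (t:ℕ) = 1 then w else a := by
        funext t
        rw [Function.update_apply]
        have ht : (t = (⟨1, by omega⟩ : Fin n)) ↔ (t:ℕ) = 1 := by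
          simp [Fin.ext_iff]
        simp only [ht]
        split_ifs <;> first | rfl | omega
      rw [heq] at hw
      exact hw
    choose inv hinv using hrinv
    have hli : ∀ x : G, pm f a (inv x) x = a := by
      intro x
      have h1 : pm f a (pm f a (inv x) x) (pm f a (inv x) (inv (inv x)))
          = pm f a (inv x) x := by
        rw [hinv (inv x), pm_right hn ha]
      calc pm f a (inv x) x
          = pm f a (pm f a (inv x) x) (pm f a (inv x) (inv (inv x))) := h1.symm
        _ = pm f a (pm f a (pm f a (inv x) x) (inv x)) (inv (inv x)) := by
            rw [← passoc hn ha hA]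
        _ = pm f a (pm f a (inv x) (pm f a x (inv x))) (inv (inv x)) := by
            rw [passoc hn ha hA (inv x) x (inv x)]
        _ = pm f a (inv x) (inv (inv x)) := by rw [hinv x, pm_right hn ha]
        _ = a := hinv (inv x)
    refine ⟨pm f a, a, inv, passoc hn ha hA, pm_left hn ha, pm_right hn ha, hli, hinv, ?_⟩
    intro z
    have := main_foldr hn ha hA n (le_refl n) z (fun i hi => absurd i.isLt (by omega))
    rwa [List.take_of_length_le (by simp)] at this
end
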